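/- arXiv:1204.0210 — 10 statements merged into one kernel-verified Lean document; each statement's English description precedes it below -/
import Mathlib

section
/- For integers d, q ≥ 2, a finite simple graph G is q^d-colorable if and only if G is q-locatable in ℤ^d. -/
open SimpleGraph

/-- Cast an integer grid point to a real point. -/
def castPt {d : ℕ} (p : Fin d → ℤ) : Fin d → ℝ := fun i => (p i : ℝ)

/-- The grid points lying on the closed segment in `ℝ^d` joining `a` and `b`. -/
def segGridPts {d : ℕ} (a b : Fin d → ℤ) : Set (Fin d → ℤ) :=
  {p | castPt p ∈ segment ℝ (castPt a) (castPt b)}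

/-- `φ` is a grid drawing of `G` in `ℤ^d`: it is injective and no vertex image other than the
endpoints lies on the closed segment representing an edge. -/
def IsGridDrawing {V : Type*} {d : ℕ} (G : SimpleGraph V) (φ : V → Fin d → ℤ) : Prop :=
  Function.Injective φ ∧
    ∀ u v w : V, G.Adj u v →
      castPt (φ w) ∈ segment ℝ (castPt (φ u)) (castPt (φ v)) → w = u ∨ w = v

/-- `G` is `q`-locatable in `ℤ^d`: it has a grid drawing in which every edge segment contains
at most `q` grid points. -/
def IsQLocatable {V : Type*} (G : SimpleGraph V) (d q : ℕ) : Prop :=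
  ∃ φ : V → Fin d → ℤ, IsGridDrawing G φ ∧
    ∀ u v : V, G.Adj u v → (segGridPts (φ u) (φ v)).ncard ≤ q

/-- A primitive grid drawing: every edge segment contains exactly its two endpoints
as grid points. -/
def IsPrimitiveDrawing {V : Type*} {d : ℕ} (G : SimpleGraph V) (φ : V → Fin d → ℤ) : Prop :=
  IsGridDrawing G φ ∧ ∀ u v : V, G.Adj u v → segGridPts (φ u) (φ v) = {φ u, φ v}

/-- `G` is locatable in `ℤ^d`: it has a primitive grid drawing in `ℤ^d`. -/
def IsLocatable {V : Type*} (G : SimpleGraph V) (d : ℕ) : Prop :=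
  ∃ φ : V → Fin d → ℤ, IsPrimitiveDrawing G φ

/-- The rank of a grid point in `ℤ^d`: the tuple of its first `d - 1` coordinates. -/
def rank {d : ℕ} (p : Fin d → ℤ) : Fin (d - 1) → ℤ :=
  fun i => p (Fin.castLE (Nat.sub_le d 1) i)

/-- `G` is embeddable on `l` columns: it has a grid drawing in `ℤ²` in which the first
coordinates of the vertex images take at most `l` distinct values. -/
def EmbeddableOnCols {V : Type*} (G : SimpleGraph V) (l : ℕ) : Prop :=
  ∃ φ : V → Fin 2 → ℤ, IsGridDrawing G φ ∧ (Set.range fun v => φ v 0).ncard ≤ l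

/-- `G` can be located on `l` columns in `ℤ^d`: it has a primitive grid drawing in `ℤ^d`
using at most `l` columns. -/
def LocatableOnCols {V : Type*} (G : SimpleGraph V) (d l : ℕ) : Prop :=
  ∃ φ : V → Fin d → ℤ, IsPrimitiveDrawing G φ ∧ (Set.range fun v => rank (φ v)).ncard ≤ l

/-- A linear forest: an acyclic graph with maximum degree at most two
(i.e. a disjoint union of paths). -/
def IsLinearForest {W : Type*} (H : SimpleGraph W) : Prop :=
  H.IsAcyclic ∧ ∀ v : W, {w | H.Adj v w}.ncard ≤ 2

/-!
Reducing a drawing modulo `q` colours `G` by `(ℤ/q)^d`: if the two ends of an edge had the same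
residues, the edge vector would be `q` times a nonzero integer vector, and its segment would carry
`q + 1` grid points.

Conversely, read a colour as a point `c v ∈ {0, …, q-1}^d` and draw `v` at `c v + T μ(a v)`,
where `μ(x) = (x, x², 0, …, 0)` is the moment curve and the `a v` are distinct integers with
`a u + a v ≥ q`. For large `T` no three vertices are collinear, since no three points of the
moment curve are. For an edge `uv` with edge vector `δ`, the residue
`(a v + a u) δ₀ - δ₁` is independent of `T`. If it is nonzero and divides `T`, the ideal of `ℤ`
generated by the coordinates of `δ` contains `T`, hence every coordinate of `c v - c u`; if it is
zero, then `c u` and `c v` agree in the first two coordinates and `δ` equals `c v - c u` elsewhere.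
Either way that ideal contains some `m` with `0 < |m| < q`, and a segment whose coordinate ideal
contains `m ≠ 0` carries at most `|m| + 1` grid points.
-/

open Filter Function

section Segments

variable {d : ℕ}

lemma mem_segGridPts_iff {a b p : Fin d → ℤ} :
    p ∈ segGridPts a b ↔
      ∃ t ∈ Set.Icc (0 : ℝ) 1, ∀ i, (p i : ℝ) = a i + t * (b i - a i) := by
  simp only [segGridPts, Set.mem_ofPred_eq, segment_eq_image', Set.mem_image, funext_iff,
    castPt, Pi.add_apply, Pi.smul_apply, Pi.sub_apply, smul_eq_mul, eq_comm]

lemma segGridPts_subset_Icc (a b : Fin d → ℤ) :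
    segGridPts a b ⊆ Set.Icc (a ⊓ b) (a ⊔ b) := by
  intro p hp
  have hsub := (convex_Icc (castPt a ⊓ castPt b) (castPt a ⊔ castPt b)).segment_subset
    ⟨inf_le_left, le_sup_left⟩ ⟨inf_le_right, le_sup_right⟩ hp
  refine ⟨fun i => ?_, fun i => ?_⟩
  · simpa [castPt] using hsub.1 i
  · simpa [castPt] using hsub.2 i

lemma segGridPts_finite (a b : Fin d → ℤ) : (segGridPts a b).Finite :=
  (Set.finite_Icc _ _).subset (segGridPts_subset_Icc a b)

lemma cross_eq_of_mem_segGridPts {a b p : Fin d → ℤ} (hp : p ∈ segGridPts a b) (i j : Fin d) :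
    (b i - a i) * (p j - a j) = (b j - a j) * (p i - a i) := by
  obtain ⟨t, -, hpt⟩ := mem_segGridPts_iff.mp hp
  have : ((b i - a i) * (p j - a j) : ℤ) = ((b j - a j) * (p i - a i) : ℝ) := by
    push_cast
    rw [hpt i, hpt j]
    ring
  exact_mod_cast this

lemma add_smul_mem_segGridPts (a w : Fin d → ℤ) {j n : ℕ} (hj : j ≤ n) :
    a + (j : ℤ) • w ∈ segGridPts a (a + (n : ℤ) • w) := by
  rcases Nat.eq_zero_or_pos n with rfl | hn
  · obtain rfl : j = 0 := by omega
    exact mem_segGridPts_iff.mpr ⟨0, by simp, by simp⟩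
  refine mem_segGridPts_iff.mpr
    ⟨j / n, ⟨by positivity, div_le_one_of_le₀ (by exact_mod_cast hj) (by positivity)⟩, fun i => ?_⟩
  simp only [Pi.add_apply, Pi.smul_apply, smul_eq_mul]
  push_cast
  field_simp
  ring

lemma le_ncard_segGridPts_of_dvd {n : ℕ} {a b : Fin d → ℤ} (hab : a ≠ b)
    (hdvd : ∀ i, (n : ℤ) ∣ b i - a i) : n + 1 ≤ (segGridPts a b).ncard := by
  choose w hw using hdvd
  obtain rfl : b = a + (n : ℤ) • w := funext fun i => by simp [← hw i]
  have hw0 : w ≠ 0 := by rintro rfl; simp at hab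
  have hinj : Set.InjOn (fun j : ℕ => a + (j : ℤ) • w) ↑(Finset.range (n + 1)) :=
    fun j _ j' _ h => Nat.cast_injective (smul_left_injective ℤ hw0 (add_left_cancel h))
  simpa using Set.ncard_le_ncard_of_injOn _ (fun j hj => add_smul_mem_segGridPts a w
    (Nat.lt_succ_iff.mp (Finset.mem_range.mp hj))) hinj (segGridPts_finite _ _)

lemma ncard_segGridPts_le_of_mem_span {a b : Fin d → ℤ} {m : ℤ} (hm : m ≠ 0)
    (hmem : m ∈ Ideal.span (Set.range (b - a))) : (segGridPts a b).ncard ≤ m.natAbs + 1 := by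
  obtain ⟨c, hc⟩ := Ideal.mem_span_range_iff_exists_fun.mp hmem
  set f : (Fin d → ℤ) → ℤ := fun p => ∑ i, c i * (p i - a i)
  have hf : ∀ p t, (∀ i, (p i : ℝ) = a i + t * (b i - a i)) → (f p : ℝ) = t * m := by
    intro p t hp
    simp only [f, ← hc, Int.cast_sum, Int.cast_mul, Int.cast_sub, hp, Pi.sub_apply,
      Finset.mul_sum]
    exact Finset.sum_congr rfl fun i _ => by ring
  have hmaps : ∀ p ∈ segGridPts a b, f p ∈ Set.uIcc 0 m := by
    intro p hp
    obtain ⟨t, ⟨ht0, ht1⟩, hpt⟩ := mem_segGridPts_iff.mp hp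
    have hfp := hf p t hpt
    rw [Set.mem_uIcc]
    rcases le_total 0 m with h | h
    · have h' : (0 : ℝ) ≤ m := by exact_mod_cast h
      exact Or.inl ⟨by exact_mod_cast (by nlinarith : (0 : ℝ) ≤ f p),
        by exact_mod_cast (by nlinarith : (f p : ℝ) ≤ m)⟩
    · have h' : (m : ℝ) ≤ 0 := by exact_mod_cast h
      exact Or.inr ⟨by exact_mod_cast (by nlinarith : (m : ℝ) ≤ f p),
        by exact_mod_cast (by nlinarith : (f p : ℝ) ≤ 0)⟩
  have hinj : Set.InjOn f (segGridPts a b) := by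
    intro p hp p' hp' hpp'
    obtain ⟨t, -, hpt⟩ := mem_segGridPts_iff.mp hp
    obtain ⟨t', -, hpt'⟩ := mem_segGridPts_iff.mp hp'
    have htt' : t = t' := by
      have := hf p t hpt
      rw [hpp', hf p' t' hpt'] at this
      exact (mul_left_injective₀ (by exact_mod_cast hm)) this.symm
    funext i
    exact_mod_cast (hpt i).trans (htt' ▸ (hpt' i).symm)
  calc (segGridPts a b).ncard ≤ (Set.uIcc 0 m).ncard :=
        Set.ncard_le_ncard_of_injOn f hmaps hinj (Set.finite_uIcc 0 m)
    _ = m.natAbs + 1 := by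
        rw [← Finset.coe_uIcc, Set.ncard_coe_finset, Int.card_uIcc, sub_zero]

end Segments

lemma eventually_add_mul_ne_zero {e x : ℤ} (hx : x ≠ 0) : ∀ᶠ T in atTop, e + T * x ≠ 0 := by
  filter_upwards [eventually_gt_atTop |e|] with T hT h
  have hT0 : 0 < T := (abs_nonneg e).trans_lt hT
  have : |e| = T * |x| := by rw [eq_neg_of_add_eq_zero_left h, abs_neg, abs_mul, abs_of_pos hT0]
  nlinarith [mul_le_mul_of_nonneg_left (Int.one_le_abs hx) hT0.le]

lemma eventually_quadratic_ne_zero {c₀ c₁ c₂ : ℤ} (h : c₂ ≠ 0) :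
    ∀ᶠ T in atTop, c₀ + c₁ * T + c₂ * T ^ 2 ≠ 0 := by
  filter_upwards [eventually_gt_atTop (|c₀| + |c₁|)] with T hT h0
  have hT1 : 1 ≤ T := by linarith [abs_nonneg c₀, abs_nonneg c₁, Int.one_le_abs h]
  have hc₂ : T ^ 2 ≤ |c₂| * T ^ 2 := le_mul_of_one_le_left (by positivity) (Int.one_le_abs h)
  have hlin : |c₂| * T ^ 2 ≤ |c₀| + |c₁| * T := by
    calc |c₂| * T ^ 2 = |c₀ + c₁ * T| := by
          rw [show c₀ + c₁ * T = -(c₂ * T ^ 2) by linarith, abs_neg, abs_mul,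
            abs_of_nonneg (sq_nonneg T)]
      _ ≤ |c₀| + |c₁| * T := by
          simpa [abs_mul, abs_of_pos (by linarith : 0 < T)] using abs_add_le c₀ (c₁ * T)
  nlinarith [abs_nonneg c₀, abs_nonneg c₁]

lemma eventually_cross_ne_zero {e₀ e₁ f₀ f₁ x₀ x₁ y₀ y₁ : ℤ} (h : x₀ * y₁ - x₁ * y₀ ≠ 0) :
    ∀ᶠ T in atTop, (e₀ + T * x₀) * (f₁ + T * y₁) - (e₁ + T * x₁) * (f₀ + T * y₀) ≠ 0 := by
  filter_upwards [eventually_quadratic_ne_zero (c₀ := e₀ * f₁ - e₁ * f₀)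
    (c₁ := e₀ * y₁ + x₀ * f₁ - e₁ * y₀ - x₁ * f₀) h] with T hT h0
  exact hT (by linear_combination h0)

lemma isGridDrawing_of_cross_ne_zero {V : Type*} {d : ℕ} (G : SimpleGraph V)
    {φ : V → Fin d → ℤ} (hinj : Injective φ) (i j : Fin d)
    (h : ∀ u v w, u ≠ v → u ≠ w → v ≠ w →
      (φ v i - φ u i) * (φ w j - φ u j) - (φ v j - φ u j) * (φ w i - φ u i) ≠ 0) :
    IsGridDrawing G φ := by
  refine ⟨hinj, fun u v w huv hw => ?_⟩
  by_contra! hne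
  exact h u v w (G.ne_of_adj huv) hne.1.symm hne.2.symm
    (sub_eq_zero.mpr (cross_eq_of_mem_segGridPts hw i j))

section ColorDrawing

variable {V : Type*} {k q : ℕ} (c : V → Fin (k + 2) → Fin q) (a : V → ℤ)

def momentCurve (x : ℤ) : Fin (k + 2) → ℤ :=
  fun i => if i = 0 then x else if i = 1 then x ^ 2 else 0

def colorDrawing (T : ℤ) (v : V) : Fin (k + 2) → ℤ :=
  fun i => (c v i : ℤ) + T * momentCurve (a v) i

/-- For every `T`, this is `(a v + a u) δ₀ - δ₁` for the edge vector `δ` of `uv` in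
`colorDrawing c a T`: the terms in `T` cancel. -/
def colorResidue (u v : V) : ℤ := (a v + a u) * ((c v 0 : ℤ) - c u 0) - ((c v 1 : ℤ) - c u 1)

variable {c a}

@[simp] lemma momentCurve_zero (x : ℤ) : momentCurve (k := k) x 0 = x := if_pos rfl

@[simp] lemma momentCurve_one (x : ℤ) : momentCurve (k := k) x 1 = x ^ 2 := by simp [momentCurve]

lemma momentCurve_of_ne {i : Fin (k + 2)} (h₀ : i ≠ 0) (h₁ : i ≠ 1) (x : ℤ) :
    momentCurve x i = 0 := by
  simp [momentCurve, h₀, h₁]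

lemma colorDrawing_sub_apply (T : ℤ) (u v : V) (i : Fin (k + 2)) :
    colorDrawing c a T v i - colorDrawing c a T u i =
      ((c v i : ℤ) - c u i) + T * (momentCurve (a v) i - momentCurve (a u) i) := by
  simp only [colorDrawing]
  ring

lemma eventually_injective_colorDrawing [Finite V] (ha : Injective a) :
    ∀ᶠ T in atTop, Injective (colorDrawing c a T) := by
  have h : ∀ᶠ T in atTop, ∀ u v, u ≠ v →
      colorDrawing c a T v 0 - colorDrawing c a T u 0 ≠ 0 := by
    simp only [eventually_all]
    intro u v huv
    simpa [colorDrawing_sub_apply] using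
      eventually_add_mul_ne_zero (e := (c v 0 : ℤ) - c u 0) (sub_ne_zero.mpr (ha.ne huv.symm))
  filter_upwards [h] with T hT u v huv
  by_contra hne
  exact hT u v hne (by rw [huv, sub_self])

lemma eventually_cross_colorDrawing_ne_zero [Finite V] (ha : Injective a) :
    ∀ᶠ T in atTop, ∀ u v w, u ≠ v → u ≠ w → v ≠ w →
      let φ := colorDrawing c a T
      (φ v 0 - φ u 0) * (φ w 1 - φ u 1) - (φ v 1 - φ u 1) * (φ w 0 - φ u 0) ≠ 0 := by
  simp only [eventually_all]
  intro u v w huv huw hvw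
  have hmoment : (a v - a u) * (a w ^ 2 - a u ^ 2) - (a v ^ 2 - a u ^ 2) * (a w - a u) ≠ 0 := by
    rw [show (a v - a u) * (a w ^ 2 - a u ^ 2) - (a v ^ 2 - a u ^ 2) * (a w - a u) =
      (a v - a u) * (a w - a u) * (a w - a v) by ring]
    exact mul_ne_zero (mul_ne_zero (sub_ne_zero.mpr (ha.ne huv.symm))
      (sub_ne_zero.mpr (ha.ne huw.symm))) (sub_ne_zero.mpr (ha.ne hvw.symm))
  simpa [colorDrawing_sub_apply] using eventually_cross_ne_zero
    (e₀ := (c v 0 : ℤ) - c u 0) (e₁ := (c v 1 : ℤ) - c u 1)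
    (f₀ := (c w 0 : ℤ) - c u 0) (f₁ := (c w 1 : ℤ) - c u 1) hmoment

lemma eventually_isGridDrawing_colorDrawing [Finite V] (G : SimpleGraph V) (ha : Injective a) :
    ∀ᶠ T in atTop, IsGridDrawing G (colorDrawing c a T) := by
  filter_upwards [eventually_injective_colorDrawing ha, eventually_cross_colorDrawing_ne_zero ha]
    with T hinj hcross
  exact isGridDrawing_of_cross_ne_zero G hinj 0 1 hcross

lemma colorResidue_mem_span (T : ℤ) (u v : V) :
    colorResidue c a u v ∈
      Ideal.span (Set.range (colorDrawing c a T v - colorDrawing c a T u)) := by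
  have hδ : ∀ i, colorDrawing c a T v i - colorDrawing c a T u i ∈
      Ideal.span (Set.range (colorDrawing c a T v - colorDrawing c a T u)) :=
    fun i => Ideal.subset_span ⟨i, rfl⟩
  have h : colorResidue c a u v =
      (a v + a u) * (colorDrawing c a T v 0 - colorDrawing c a T u 0) -
        (colorDrawing c a T v 1 - colorDrawing c a T u 1) := by
    simp only [colorResidue, colorDrawing_sub_apply, momentCurve_zero, momentCurve_one]
    ring
  rw [h]
  exact Ideal.sub_mem _ (Ideal.mul_mem_left _ _ (hδ 0)) (hδ 1)

lemma colorResidue_eq_zero {u v : V} (huv : (q : ℤ) ≤ a u + a v)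
    (h : colorResidue c a u v = 0) : c u 0 = c v 0 ∧ c u 1 = c v 1 := by
  have hu₀ := (c u 0).isLt
  have hv₀ := (c v 0).isLt
  have hu₁ := (c u 1).isLt
  have hv₁ := (c v 1).isLt
  have h₀ : (c v 0 : ℤ) - c u 0 = 0 := by
    by_contra hne
    unfold colorResidue at h
    rcases lt_or_gt_of_ne hne with hlt | hgt <;> nlinarith
  unfold colorResidue at h
  rw [h₀, mul_zero, zero_sub, neg_eq_zero] at h
  exact ⟨Fin.ext (by omega), Fin.ext (by omega)⟩

lemma colorDiff_mem_span {T : ℤ} {u v : V} (huv : (q : ℤ) ≤ a u + a v)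
    (hT : colorResidue c a u v ≠ 0 → colorResidue c a u v ∣ T) (i : Fin (k + 2)) :
    (c v i : ℤ) - c u i ∈
      Ideal.span (Set.range (colorDrawing c a T v - colorDrawing c a T u)) := by
  set I := Ideal.span (Set.range (colorDrawing c a T v - colorDrawing c a T u))
  have hδ : colorDrawing c a T v i - colorDrawing c a T u i ∈ I := Ideal.subset_span ⟨i, rfl⟩
  rw [colorDrawing_sub_apply] at hδ
  by_cases hW : colorResidue c a u v = 0
  · obtain ⟨h₀, h₁⟩ := colorResidue_eq_zero huv hW
    by_cases hi₀ : i = 0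
    · simp [hi₀, h₀]
    by_cases hi₁ : i = 1
    · simp [hi₁, h₁]
    simpa [momentCurve_of_ne hi₀ hi₁] using hδ
  · obtain ⟨r, hr⟩ := hT hW
    have hTI : T ∈ I := hr ▸ Ideal.mul_mem_right r I (colorResidue_mem_span T u v)
    simpa using Ideal.sub_mem I hδ
      (Ideal.mul_mem_right (momentCurve (a v) i - momentCurve (a u) i) I hTI)

lemma ncard_segGridPts_colorDrawing_le {T : ℤ} {u v : V} (huv : (q : ℤ) ≤ a u + a v)
    (hT : colorResidue c a u v ≠ 0 → colorResidue c a u v ∣ T) (hc : c u ≠ c v) :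
    (segGridPts (colorDrawing c a T u) (colorDrawing c a T v)).ncard ≤ q := by
  obtain ⟨i, hi⟩ := Function.ne_iff.mp hc
  have hne : (c v i : ℤ) - c u i ≠ 0 := fun h => hi (Fin.ext (by omega))
  have hu := (c u i).isLt
  have hv := (c v i).isLt
  calc _ ≤ ((c v i : ℤ) - c u i).natAbs + 1 :=
        ncard_segGridPts_le_of_mem_span hne (colorDiff_mem_span huv hT i)
    _ ≤ q := by omega

end ColorDrawing

theorem IsQLocatable.colorable {V : Type*} (G : SimpleGraph V) {d q : ℕ} (hq : 0 < q)
    (h : IsQLocatable G d q) : G.Colorable (q ^ d) := by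
  have : NeZero q := ⟨hq.ne'⟩
  obtain ⟨φ, ⟨hinj, -⟩, hcount⟩ := h
  refine (Coloring.mk (fun v i => (φ v i : ZMod q)) fun {u v} huv heq => ?_).colorable.mono
    (by simp)
  have hdvd : ∀ i, (q : ℤ) ∣ φ v i - φ u i := fun i =>
    (ZMod.intCast_eq_intCast_iff_dvd_sub _ _ _).mp (congrFun heq i)
  have := le_ncard_segGridPts_of_dvd (hinj.ne (G.ne_of_adj huv)) hdvd
  have := hcount u v huv
  omega

theorem isQLocatable_of_colorable {V : Type*} [Fintype V] (G : SimpleGraph V) (k q : ℕ)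
    (h : G.Colorable (q ^ (k + 2))) : IsQLocatable G (k + 2) q := by
  obtain ⟨C⟩ := h
  set c : V → Fin (k + 2) → Fin q := fun v => finFunctionFinEquiv.symm (C v)
  have hc : ∀ {u v}, G.Adj u v → c u ≠ c v := fun huv h =>
    C.valid huv (finFunctionFinEquiv.symm.injective h)
  set a : V → ℤ := fun v => q + (Fintype.equivFin V v : ℕ)
  have ha : Injective a := fun u v h =>
    (Fintype.equivFin V).injective (Fin.ext (by simpa [a] using h))
  have haq : ∀ u v, (q : ℤ) ≤ a u + a v := fun u v => by simp only [a]; omega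
  set L : ℤ := ∏ p ∈ Finset.univ.filter (fun p : V × V => colorResidue c a p.1 p.2 ≠ 0),
    |colorResidue c a p.1 p.2|
  have hL : 0 < L := Finset.prod_pos fun p hp => abs_pos.mpr (Finset.mem_filter.mp hp).2
  obtain ⟨s, hs⟩ := ((tendsto_id.const_mul_atTop' hL).eventually
    (eventually_isGridDrawing_colorDrawing G ha)).exists
  refine ⟨colorDrawing c a (L * s), hs, fun u v huv =>
    ncard_segGridPts_colorDrawing_le (haq u v) (fun hW => ?_) (hc huv)⟩
  exact ((dvd_abs _ _).mpr dvd_rfl).trans ((Finset.dvd_prod_of_mem _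
    (Finset.mem_filter.mpr ⟨Finset.mem_univ (u, v), hW⟩)).trans (dvd_mul_right L s))

theorem locatable_complexity {V : Type*} [Fintype V] (G : SimpleGraph V)
    (d q : ℕ) (hd : 2 ≤ d) (hq : 2 ≤ q) :
    G.Colorable (q ^ d) ↔ IsQLocatable G d q := by
  obtain ⟨k, rfl⟩ := Nat.exists_eq_add_of_le' hd
  exact ⟨isQLocatable_of_colorable G k q, IsQLocatable.colorable G (by omega)⟩
end

section
/- For integers d, q ≥ 2 and s = q^d, there exist pairwise distinct ranks r₀, r₁, …, r_{s−1} ∈ ℤ^{d−1} and infinite sets W_i ⊆ {(r_i, x) : x ∈ ℤ} for 0 ≤ i ≤ s−1 such that for all i ≠ j and all points a ∈ W_i, b ∈ W_j, one has gcd(|a₁−b₁|, …, |a_d−b_d|) ≤ q − 1. -/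
open SimpleGraph

def dig (q k t : ℕ) : ℕ := t / q ^ k % q

lemma dig_lt {q : ℕ} (hq : 0 < q) (k t : ℕ) : dig q k t < q := Nat.mod_lt _ hq

lemma base_inj {q a a' b b' : ℕ} (ha : a < q) (ha' : a' < q)
    (h : a + q * b = a' + q * b') : a = a' ∧ b = b' := by
  have hq : 0 < q := by omega
  constructor
  · have h1 := congrArg (· % q) h
    simpa [Nat.add_mul_mod_self_left, Nat.mod_eq_of_lt ha, Nat.mod_eq_of_lt ha'] using h1
  · have h2 := congrArg (· / q) h
    simpa [Nat.add_mul_div_left _ _ hq, Nat.div_eq_of_lt ha, Nat.div_eq_of_lt ha'] using h2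

lemma dig_inj {q : ℕ} (hq : 0 < q) :
    ∀ d x y, x < q ^ d → y < q ^ d → (∀ k, k < d → dig q k x = dig q k y) → x = y := by
  intro d
  induction d with
  | zero => intro x y hx hy _; simp [pow_zero] at hx hy; omega
  | succ d ih =>
    intro x y hx hy h
    have hx' : x / q < q ^ d := Nat.div_lt_of_lt_mul (by rw [mul_comm, ← pow_succ]; exact hx)
    have hy' : y / q < q ^ d := Nat.div_lt_of_lt_mul (by rw [mul_comm, ← pow_succ]; exact hy)
    have hdiv : x / q = y / q := by
      refine ih _ _ hx' hy' fun k hk => ?_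
      have hh := h (k + 1) (by omega)
      simpa [dig, Nat.div_div_eq_div_mul, pow_succ, mul_comm] using hh
    have h0 := h 0 (by omega)
    have e0 : x % q = y % q := by simpa [dig] using h0
    calc x = q * (x / q) + x % q := (Nat.div_add_mod x q).symm
      _ = q * (y / q) + y % q := by rw [hdiv, e0]
      _ = y := Nat.div_add_mod y q

def colR (d q : ℕ) (t : ℕ) : Fin (d - 1) → ℤ := fun k =>
  if (k : ℕ) = 0 then ((dig q 0 t + q * dig q (d - 1) t : ℕ) : ℤ)
  else (dig q (k : ℕ) t : ℤ)

def lastIdx (d : ℕ) (hd : 2 ≤ d) : Fin d := ⟨d - 1, by omega⟩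

def colW (d q : ℕ) (hd : 2 ≤ d) (t : ℕ) : Set (Fin d → ℤ) :=
  {p | rank p = colR d q t ∧
    ∃ m : ℤ, p (lastIdx d hd) = (dig q (d - 1) t : ℤ) + m * (Nat.factorial (q * q) : ℤ)}

lemma col_gcd (d q : ℕ) (hd : 2 ≤ d) (hq : 2 ≤ q) (s t : ℕ)
    (hs : s < q ^ d) (ht : t < q ^ d) (hst : s ≠ t)
    (a b : Fin d → ℤ) (ha : a ∈ colW d q hd s) (hb : b ∈ colW d q hd t) :
    Finset.univ.gcd (fun k => (a k - b k).natAbs) ≤ q - 1 := by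
  have hq0 : 0 < q := by omega
  have h0lt : 0 < d - 1 := by omega
  obtain ⟨hra, ma, hma⟩ := ha
  obtain ⟨hrb, mb, hmb⟩ := hb
  set g := Finset.univ.gcd (fun k => (a k - b k).natAbs) with hg
  have gdvd : ∀ k : Fin d, g ∣ (a k - b k).natAbs :=
    fun k => Finset.gcd_dvd (Finset.mem_univ k)
  have gdvdZ : ∀ k : Fin d, (g : ℤ) ∣ a k - b k := fun k =>
    dvd_trans (Int.natCast_dvd_natCast.mpr (gdvd k)) (Int.natAbs_dvd.mpr dvd_rfl)
  have key : ∀ z : ℤ, (g : ℤ) ∣ z → z ≠ 0 → z.natAbs ≤ q - 1 → g ≤ q - 1 := by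
    intro z h1 h2 h3
    have h4 : g ∣ z.natAbs := by
      have h5 := Int.natAbs_dvd_natAbs.mpr h1
      simpa using h5
    exact le_trans (Nat.le_of_dvd (Int.natAbs_pos.mpr h2) h4) h3
  by_cases hmid : ∀ k, 0 < k → k < d - 1 → dig q k s = dig q k t
  · -- middle digits all agree
    have ea : a (Fin.castLE (Nat.sub_le d 1) ⟨0, h0lt⟩) = colR d q s ⟨0, h0lt⟩ :=
      congrFun hra ⟨0, h0lt⟩
    have eb : b (Fin.castLE (Nat.sub_le d 1) ⟨0, h0lt⟩) = colR d q t ⟨0, h0lt⟩ :=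
      congrFun hrb ⟨0, h0lt⟩
    have cS : colR d q s ⟨0, h0lt⟩ = ((dig q 0 s + q * dig q (d - 1) s : ℕ) : ℤ) := rfl
    have cT : colR d q t ⟨0, h0lt⟩ = ((dig q 0 t + q * dig q (d - 1) t : ℕ) : ℤ) := rfl
    have h6 := gdvdZ (Fin.castLE (Nat.sub_le d 1) ⟨0, h0lt⟩)
    rw [ea, eb, cS, cT] at h6
    by_cases hD : dig q (d - 1) s = dig q (d - 1) t
    · -- then the zeroth digits differ
      have h0ne : dig q 0 s ≠ dig q 0 t := by
        intro h0eq
        apply hst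
        refine dig_inj hq0 d s t hs ht fun k hk => ?_
        rcases Nat.lt_or_ge k (d - 1) with hcase | hcase
        · rcases Nat.eq_zero_or_pos k with rfl | hp
          · exact h0eq
          · exact hmid k hp hcase
        · have hke : k = d - 1 := by omega
          rw [hke]; exact hD
      have hz : ((dig q 0 s + q * dig q (d - 1) s : ℕ) : ℤ) -
          ((dig q 0 t + q * dig q (d - 1) t : ℕ) : ℤ) =
          (dig q 0 s : ℤ) - (dig q 0 t : ℤ) := by
        rw [hD]; push_cast; ring
      rw [hz] at h6
      refine key _ h6 ?_ ?_
      · intro h7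
        apply h0ne
        have := sub_eq_zero.mp h7
        exact_mod_cast this
      · have b1 := dig_lt hq0 0 s
        have b2 := dig_lt hq0 0 t
        omega
    · -- last digits differ: use the free coordinate
      obtain ⟨Q, hQ⟩ : ∃ n, n = q * q := ⟨_, rfl⟩
      set A := dig q 0 s + q * dig q (d - 1) s with hA
      set B := dig q 0 t + q * dig q (d - 1) t with hB
      have hABne : A ≠ B := fun h7 =>
        hD (base_inj (dig_lt hq0 0 s) (dig_lt hq0 0 t) h7).2
      have hAlt : A < Q := by
        rw [hQ, hA]
        nlinarith [dig_lt hq0 0 s, dig_lt hq0 (d - 1) s]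
      have hBlt : B < Q := by
        rw [hQ, hB]
        nlinarith [dig_lt hq0 0 t, dig_lt hq0 (d - 1) t]
      have hABz : ((A : ℤ) - B) ≠ 0 := by
        intro h7; exact hABne (by exact_mod_cast sub_eq_zero.mp h7)
      have gdvdAB : g ∣ ((A : ℤ) - B).natAbs := by
        simpa using Int.natAbs_dvd_natAbs.mpr h6
      have gpos : 0 < g :=
        Nat.pos_of_dvd_of_pos gdvdAB (Int.natAbs_pos.mpr hABz)
      have gleQ : g ≤ Q := by
        have h8 : ((A : ℤ) - B).natAbs ≤ Q := by omega
        exact le_trans (Nat.le_of_dvd (Int.natAbs_pos.mpr hABz) gdvdAB) h8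
      have gdvdM : g ∣ Nat.factorial (q * q) :=
        Nat.dvd_factorial gpos (by rw [← hQ]; exact gleQ)
      have hZM : (g : ℤ) ∣ (Nat.factorial (q * q) : ℤ) := Int.natCast_dvd_natCast.mpr gdvdM
      have h9 := gdvdZ (lastIdx d hd)
      rw [hma, hmb] at h9
      have h10 : (g : ℤ) ∣ (dig q (d - 1) s : ℤ) - (dig q (d - 1) t : ℤ) := by
        have h11 : ((dig q (d - 1) s : ℤ) + ma * (Nat.factorial (q * q) : ℤ)) -
            ((dig q (d - 1) t : ℤ) + mb * (Nat.factorial (q * q) : ℤ)) =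
            ((dig q (d - 1) s : ℤ) - (dig q (d - 1) t : ℤ)) +
              (ma - mb) * (Nat.factorial (q * q) : ℤ) := by ring
        rw [h11] at h9
        have h12 := dvd_sub h9 (hZM.mul_left (ma - mb))
        simpa using h12
      refine key _ h10 ?_ ?_
      · intro h13; exact hD (by exact_mod_cast sub_eq_zero.mp h13)
      · have b1 := dig_lt hq0 (d - 1) s
        have b2 := dig_lt hq0 (d - 1) t
        omega
  · push_neg at hmid
    obtain ⟨k, hk0, hk1, hkne⟩ := hmid
    have ea : a (Fin.castLE (Nat.sub_le d 1) ⟨k, hk1⟩) = colR d q s ⟨k, hk1⟩ :=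
      congrFun hra ⟨k, hk1⟩
    have eb : b (Fin.castLE (Nat.sub_le d 1) ⟨k, hk1⟩) = colR d q t ⟨k, hk1⟩ :=
      congrFun hrb ⟨k, hk1⟩
    have cS : colR d q s ⟨k, hk1⟩ = (dig q k s : ℤ) := if_neg (by simp; omega)
    have cT : colR d q t ⟨k, hk1⟩ = (dig q k t : ℤ) := if_neg (by simp; omega)
    have h6 := gdvdZ (Fin.castLE (Nat.sub_le d 1) ⟨k, hk1⟩)
    rw [ea, eb, cS, cT] at h6
    refine key _ h6 ?_ ?_
    · intro h13; exact hkne (by exact_mod_cast sub_eq_zero.mp h13)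
    · have b1 := dig_lt hq0 k s
      have b2 := dig_lt hq0 k t
      omega

lemma colW_infinite (d q : ℕ) (hd : 2 ≤ d) (hq : 2 ≤ q) (t : ℕ) :
    (colW d q hd t).Infinite := by
  have hM : (0 : ℤ) < (Nat.factorial (q * q) : ℤ) := by exact_mod_cast Nat.factorial_pos _
  apply Set.infinite_of_injective_forall_mem
    (f := fun m : ℤ => fun k : Fin d =>
      if h : (k : ℕ) < d - 1 then colR d q t ⟨k, h⟩
      else (dig q (d - 1) t : ℤ) + m * (Nat.factorial (q * q) : ℤ))
  · intro m m' h
    have h1 := congrFun h (lastIdx d hd)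
    have hnlt : ¬ ((lastIdx d hd : Fin d) : ℕ) < d - 1 := by simp [lastIdx]
    simp only [dif_neg hnlt] at h1
    have := add_left_cancel h1
    exact mul_right_cancel₀ (by omega) this
  · intro m
    refine ⟨?_, ?_⟩
    · funext idx
      have hlt : ((Fin.castLE (Nat.sub_le d 1) idx : Fin d) : ℕ) < d - 1 := by
        simpa using idx.isLt
      show (if h : ((Fin.castLE (Nat.sub_le d 1) idx : Fin d) : ℕ) < d - 1
          then colR d q t ⟨_, h⟩ else _) = colR d q t idx
      rw [dif_pos hlt]
      exact congrArg (colR d q t) (by simp [Fin.ext_iff])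
    · refine ⟨m, ?_⟩
      have hnlt : ¬ ((lastIdx d hd : Fin d) : ℕ) < d - 1 := by simp [lastIdx]
      show (if h : _ then _ else _) = _
      rw [dif_neg hnlt]

lemma colR_inj (d q : ℕ) (hd : 2 ≤ d) (hq : 2 ≤ q) (s t : ℕ)
    (hs : s < q ^ d) (ht : t < q ^ d) (h : colR d q s = colR d q t) : s = t := by
  have hq0 : 0 < q := by omega
  have h0lt : 0 < d - 1 := by omega
  have h0 : ((dig q 0 s + q * dig q (d - 1) s : ℕ) : ℤ) =
      ((dig q 0 t + q * dig q (d - 1) t : ℕ) : ℤ) := congrFun h ⟨0, h0lt⟩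
  have e2 : dig q 0 s + q * dig q (d - 1) s = dig q 0 t + q * dig q (d - 1) t := by
    exact_mod_cast h0
  obtain ⟨e3, e4⟩ := base_inj (dig_lt hq0 0 s) (dig_lt hq0 0 t) e2
  refine dig_inj hq0 d s t hs ht fun k hk => ?_
  rcases Nat.eq_zero_or_pos k with rfl | hp
  · exact e3
  · rcases Nat.lt_or_ge k (d - 1) with hc | hc
    · have h5 := congrFun h ⟨k, hc⟩
      have c1 : colR d q s ⟨k, hc⟩ = (dig q k s : ℤ) := if_neg (by simp; omega)
      have c2 : colR d q t ⟨k, hc⟩ = (dig q k t : ℤ) := if_neg (by simp; omega)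
      rw [c1, c2] at h5
      exact_mod_cast h5
    · have hke : k = d - 1 := by omega
      rw [hke]; exact e4

theorem exists_good_columns (d q : ℕ) (hd : 2 ≤ d) (hq : 2 ≤ q) :
    ∃ r : Fin (q ^ d) → Fin (d - 1) → ℤ, Function.Injective r ∧
      ∃ W : Fin (q ^ d) → Set (Fin d → ℤ),
        (∀ i, (W i).Infinite) ∧
        (∀ i, W i ⊆ {p : Fin d → ℤ | rank p = r i}) ∧
        (∀ i j : Fin (q ^ d), i ≠ j → ∀ a ∈ W i, ∀ b ∈ W j,
          Finset.univ.gcd (fun k => (a k - b k).natAbs) ≤ q - 1) := by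
  refine ⟨fun i => colR d q i.val, ?_, fun i => colW d q hd i.val, ?_, ?_, ?_⟩
  · intro i j h
    exact Fin.ext (colR_inj d q hd hq _ _ i.isLt j.isLt h)
  · intro i
    exact colW_infinite d q hd hq i.val
  · intro i p hp
    exact hp.1
  · intro i j hij a ha b hb
    exact col_gcd d q hd hq _ _ i.isLt j.isLt (fun h => hij (Fin.ext h)) a b ha hb
end

section
/- Every finite simple graph G is embeddable on at most χ(G) columns, where χ(G) is the chromatic number of G. -/
open SimpleGraph

lemma aux_lt {N α β : ℤ} {i j l : ℕ} (hN : 2 ≤ N) (hα : 0 < α) (hβ : 0 < β)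
    (hsum : α + β < N) (hlj : l ≠ j) (hij : i < j) :
    (α + β) * N ^ l ≠ α * N ^ i + β * N ^ j := by
  have hN0 : (0:ℤ) < N := by linarith
  have hN1 : (1:ℤ) ≤ N := by linarith
  rcases lt_or_gt_of_ne hlj with h | h
  · -- l < j : LHS < N^(l+1) ≤ N^j ≤ β N^j < RHS
    have h1 : (α + β) * N ^ l < N ^ (l + 1) := by
      have : (0:ℤ) < N ^ l := pow_pos hN0 l
      calc (α + β) * N ^ l < N * N ^ l := by nlinarith
        _ = N ^ (l + 1) := by ring
    have h2 : N ^ (l + 1) ≤ N ^ j := pow_le_pow_right₀ hN1 h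
    have h3 : (N:ℤ) ^ j ≤ β * N ^ j := by nlinarith [pow_pos hN0 j]
    have h4 : (0:ℤ) < α * N ^ i := by positivity
    intro he; linarith
  · -- l > j : RHS ≤ (α+β) N^j < N^(j+1) ≤ N^l ≤ LHS
    have h1 : α * N ^ i + β * N ^ j ≤ (α + β) * N ^ j := by
      have : (N:ℤ) ^ i ≤ N ^ j := pow_le_pow_right₀ hN1 hij.le
      nlinarith
    have h2 : (α + β) * N ^ j < N ^ (j + 1) := by
      have : (0:ℤ) < N ^ j := pow_pos hN0 j
      calc (α + β) * N ^ j < N * N ^ j := by nlinarith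
        _ = N ^ (j + 1) := by ring
    have h3 : (N:ℤ) ^ (j + 1) ≤ N ^ l := pow_le_pow_right₀ hN1 h
    have h4 : N ^ l ≤ (α + β) * N ^ l := by nlinarith [pow_pos hN0 l]
    intro he; linarith

lemma aux_key {N α β : ℤ} {i j l : ℕ} (hN : 2 ≤ N) (hα : 0 < α) (hβ : 0 < β)
    (hsum : α + β < N) (hij : i ≠ j) (hli : l ≠ i) (hlj : l ≠ j) :
    (α + β) * N ^ l ≠ α * N ^ i + β * N ^ j := by
  rcases lt_or_gt_of_ne hij with h | h
  · exact aux_lt hN hα hβ hsum hlj h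
  · have := aux_lt hN hβ hα (by linarith) hli h
    intro he; exact this (by linarith)


theorem embeddableOnCols_chromaticNumber {V : Type*} [Fintype V] (G : SimpleGraph V) :
    EmbeddableOnCols G G.chromaticNumber.toNat := by
  classical
  set k := G.chromaticNumber.toNat with hk
  obtain ⟨C⟩ := G.colorable_chromaticNumber_of_fintype
  set N : ℤ := (k : ℤ) + 2 with hN
  have hN2 : (2:ℤ) ≤ N := by simp [hN]
  set e : V → ℕ := fun v => (Fintype.equivFin V v : ℕ) with he
  have heinj : Function.Injective e := by
    intro a b h
    exact (Fintype.equivFin V).injective (Fin.val_injective h)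
  set φ : V → Fin 2 → ℤ := fun v => ![((C v : ℕ) : ℤ), N ^ (e v)] with hφ
  have hφ0 : ∀ v, φ v 0 = ((C v : ℕ) : ℤ) := fun v => rfl
  have hφ1 : ∀ v, φ v 1 = N ^ (e v) := fun v => rfl
  have hpowinj : Function.Injective fun n : ℕ => N ^ n := by
    have hmono : StrictMono fun n : ℕ => N ^ n := fun a b h => by
      exact pow_lt_pow_right₀ (by linarith) h
    exact hmono.injective
  have hinj : Function.Injective φ := by
    intro a b h
    have := congrFun h 1
    rw [hφ1, hφ1] at this
    exact heinj (hpowinj this)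
  refine ⟨φ, ⟨hinj, ?_⟩, ?_⟩
  · intro u v w hadj hmem
    by_cases hwu : w = u
    · exact Or.inl hwu
    by_cases hwv : w = v
    · exact Or.inr hwv
    exfalso
    obtain ⟨s, t, hs, ht, hst, heq⟩ := hmem
    have h0 := congrFun heq 0
    have h1 := congrFun heq 1
    simp only [castPt, Pi.add_apply, Pi.smul_apply, smul_eq_mul, hφ0, hφ1,
      Int.cast_natCast, Int.cast_pow] at h0 h1
    -- names
    have huv : u ≠ v := hadj.ne
    have hab : ((C u : ℕ) : ℤ) ≠ ((C v : ℕ) : ℤ) := by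
      have := C.valid hadj
      exact_mod_cast fun h => this (Fin.val_injective (by exact_mod_cast h))
    have habR : (((C u : ℕ) : ℤ) : ℝ) ≠ (((C v : ℕ) : ℤ) : ℝ) := by
      exact_mod_cast hab
    -- t ≠ 0 and s ≠ 0
    have ht0 : t ≠ 0 := by
      intro h
      apply hwu
      apply hinj
      have hs1 : s = 1 := by linarith
      funext i
      have := congrFun heq i
      rw [h, hs1] at this
      simp only [castPt, Pi.add_apply, Pi.smul_apply, smul_eq_mul, one_mul,
        zero_mul, add_zero] at this
      exact_mod_cast this.symm
    have hs0 : s ≠ 0 := by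
      intro h
      apply hwv
      apply hinj
      have ht1 : t = 1 := by linarith
      funext i
      have := congrFun heq i
      rw [h, ht1] at this
      simp only [castPt, Pi.add_apply, Pi.smul_apply, smul_eq_mul, one_mul,
        zero_mul, zero_add] at this
      exact_mod_cast this.symm
    have hs' : 0 < s := lt_of_le_of_ne hs (Ne.symm hs0)
    have ht' : 0 < t := lt_of_le_of_ne ht (Ne.symm ht0)
    set A : ℝ := (((C u : ℕ) : ℤ) : ℝ) with hA
    set B : ℝ := (((C v : ℕ) : ℤ) : ℝ) with hB
    set M : ℝ := (((C w : ℕ) : ℤ) : ℝ) with hM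
    set Yu : ℝ := ((N ^ e u : ℤ) : ℝ) with hYu
    set Yv : ℝ := ((N ^ e v : ℤ) : ℝ) with hYv
    set Yw : ℝ := ((N ^ e w : ℤ) : ℝ) with hYw
    have h0' : s * A + t * B = M := by
      rw [hA, hB, hM]; push_cast; exact_mod_cast h0
    have h1' : s * Yu + t * Yv = Yw := by
      rw [hYu, hYv, hYw]; push_cast; exact_mod_cast h1
    have hp : M - A = t * (B - A) := by linear_combination -h0' + A * hst
    have hq : B - M = s * (B - A) := by linear_combination h0' - B * hst
    have keyR : (B - A) * Yw = (B - M) * Yu + (M - A) * Yv := by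
      linear_combination (-(B - A)) * h1' - Yu * hq - Yv * hp
    have keyZ : (((C v : ℕ) : ℤ) - ((C u : ℕ) : ℤ)) * N ^ e w
        = (((C v : ℕ) : ℤ) - ((C w : ℕ) : ℤ)) * N ^ e u
          + (((C w : ℕ) : ℤ) - ((C u : ℕ) : ℤ)) * N ^ e v := by
      have h := keyR
      rw [hA, hB, hM, hYu, hYv, hYw] at h
      apply (Int.cast_injective (α := ℝ))
      push_cast at h ⊢
      linear_combination h
    have hij : e u ≠ e v := fun h => huv (heinj h)
    have hli : e w ≠ e u := fun h => hwu (heinj h)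
    have hlj : e w ≠ e v := fun h => hwv (heinj h)
    have hu_lt : ((C u : ℕ) : ℤ) < (k : ℤ) := by exact_mod_cast (C u).isLt
    have hv_lt : ((C v : ℕ) : ℤ) < (k : ℤ) := by exact_mod_cast (C v).isLt
    have hu_nn : (0 : ℤ) ≤ ((C u : ℕ) : ℤ) := Int.natCast_nonneg _
    have hv_nn : (0 : ℤ) ≤ ((C v : ℕ) : ℤ) := Int.natCast_nonneg _
    rcases hab.lt_or_gt with hlt | hlt
    · -- a < b
      have hltR : A < B := by rw [hA, hB]; exact_mod_cast hlt
      have hp' : (0 : ℝ) < M - A := by rw [hp]; exact mul_pos ht' (by linarith)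
      have hq' : (0 : ℝ) < B - M := by rw [hq]; exact mul_pos hs' (by linarith)
      have hpZ : (0 : ℤ) < ((C w : ℕ) : ℤ) - ((C u : ℕ) : ℤ) := by
        rw [hM, hA] at hp'; exact_mod_cast hp'
      have hqZ : (0 : ℤ) < ((C v : ℕ) : ℤ) - ((C w : ℕ) : ℤ) := by
        rw [hM, hB] at hq'; exact_mod_cast hq'
      refine aux_key (α := ((C v : ℕ) : ℤ) - ((C w : ℕ) : ℤ))
        (β := ((C w : ℕ) : ℤ) - ((C u : ℕ) : ℤ)) (i := e u) (j := e v) (l := e w)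
        hN2 hqZ hpZ (by rw [hN]; linarith) hij hli hlj ?_
      linear_combination keyZ
    · -- b < a
      have hltR : B < A := by rw [hA, hB]; exact_mod_cast hlt
      have hp' : (0 : ℝ) < A - M := by nlinarith [hp]
      have hq' : (0 : ℝ) < M - B := by nlinarith [hq]
      have hpZ : (0 : ℤ) < ((C u : ℕ) : ℤ) - ((C w : ℕ) : ℤ) := by
        rw [hM, hA] at hp'; exact_mod_cast hp'
      have hqZ : (0 : ℤ) < ((C w : ℕ) : ℤ) - ((C v : ℕ) : ℤ) := by
        rw [hM, hB] at hq'; exact_mod_cast hq'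
      refine aux_key (α := ((C w : ℕ) : ℤ) - ((C v : ℕ) : ℤ))
        (β := ((C u : ℕ) : ℤ) - ((C w : ℕ) : ℤ)) (i := e u) (j := e v) (l := e w)
        hN2 hqZ hpZ (by rw [hN]; linarith) hij hli hlj ?_
      linear_combination -keyZ
  · -- column count
    have hsub : (Set.range fun v => φ v 0) ⊆
        (fun i : Fin k => ((i : ℕ) : ℤ)) '' Set.univ := by
      rintro x ⟨v, rfl⟩
      exact ⟨C v, Set.mem_univ _, rfl⟩
    calc (Set.range fun v => φ v 0).ncard
        ≤ ((fun i : Fin k => ((i : ℕ) : ℤ)) '' Set.univ).ncard :=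
          Set.ncard_le_ncard hsub (Set.finite_univ.image _)
      _ ≤ (Set.univ : Set (Fin k)).ncard := Set.ncard_image_le Set.finite_univ
      _ = k := by simp [Set.ncard_univ]
end

section
/- If a finite simple graph G has a grid drawing in ℤ² using at most l columns, where l ≥ 2, then G is l-locatable in ℤ². -/
open SimpleGraph

lemma seg_coord' {p a b : Fin 2 → ℤ} (h : castPt p ∈ segment ℝ (castPt a) (castPt b)) :
    ∃ θ : ℝ, 0 ≤ θ ∧ θ ≤ 1 ∧ ∀ i, (p i : ℝ) = (1 - θ) * a i + θ * b i := by
  rw [segment_eq_image] at h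
  obtain ⟨θ, hθ, hpe⟩ := h
  refine ⟨θ, hθ.1, hθ.2, fun i => ?_⟩
  have := congrFun hpe i
  simp only [Pi.add_apply, Pi.smul_apply, smul_eq_mul, castPt] at this
  linarith [this]

lemma coord_seg (a b : Fin 2 → ℝ) (θ : ℝ) (h0 : 0 ≤ θ) (h1 : θ ≤ 1) :
    (1 - θ) • a + θ • b ∈ segment ℝ a b :=
  ⟨1 - θ, θ, by linarith, h0, by ring, rfl⟩

lemma vert_mem_segment {a b c : Fin 2 → ℤ} (h0a : a 0 = c 0) (h0b : b 0 = c 0)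
    (h1 : a 1 ≤ c 1) (h2 : c 1 ≤ b 1) :
    castPt c ∈ segment ℝ (castPt a) (castPt b) := by
  rcases eq_or_lt_of_le (h1.trans h2) with he|hlt
  · have hca : c = a := by
      funext i
      refine Fin.cases ?_ (fun j => ?_) i
      · exact h0a.symm
      · have : j = 0 := Subsingleton.elim _ _
        subst this
        show c 1 = a 1
        omega
    rw [hca]
    exact left_mem_segment ℝ _ _
  · set θ : ℝ := ((c 1 : ℝ) - a 1) / ((b 1 : ℝ) - a 1) with hθdef
    have hden : (0:ℝ) < (b 1 : ℝ) - a 1 := by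
      have : a 1 < b 1 := hlt
      exact_mod_cast sub_pos.2 this
    have hθ0 : 0 ≤ θ := div_nonneg (by exact_mod_cast sub_nonneg.2 h1) hden.le
    have hθ1 : θ ≤ 1 := (div_le_one hden).2 (by exact_mod_cast sub_le_sub_right h2 _)
    have heq : castPt c = (1 - θ) • castPt a + θ • castPt b := by
      funext i
      simp only [Pi.add_apply, Pi.smul_apply, smul_eq_mul, castPt]
      refine Fin.cases ?_ (fun j => ?_) i
      · have e1 : (a 0 : ℝ) = c 0 := by exact_mod_cast h0a
        have e2 : (b 0 : ℝ) = c 0 := by exact_mod_cast h0b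
        rw [e1, e2]; ring
      · have : j = 0 := Subsingleton.elim _ _
        subst this
        show (c 1 : ℝ) = (1 - θ) * a 1 + θ * b 1
        rw [hθdef]
        field_simp
        ring
    rw [heq]
    exact coord_seg _ _ θ hθ0 hθ1

lemma vert_seg {a b : Fin 2 → ℤ} (h0 : a 0 = b 0) (h1 : b 1 = a 1 + 1) :
    segGridPts a b ⊆ {a, b} := by
  intro p hp
  obtain ⟨θ, hθ0, hθ1, hc⟩ := seg_coord' hp
  have e0 : p 0 = a 0 := by
    have := hc 0
    have h0' : (b 0 : ℝ) = a 0 := by exact_mod_cast h0.symm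
    rw [h0'] at this
    have : (p 0 : ℝ) = a 0 := by linarith [this]
    exact_mod_cast this
  have e1lo : a 1 ≤ p 1 := by
    have := hc 1
    have h1' : (b 1 : ℝ) = a 1 + 1 := by exact_mod_cast h1
    rw [h1'] at this
    have : (a 1 : ℝ) ≤ p 1 := by nlinarith [this]
    exact_mod_cast this
  have e1hi : p 1 ≤ a 1 + 1 := by
    have := hc 1
    have h1' : (b 1 : ℝ) = a 1 + 1 := by exact_mod_cast h1
    rw [h1'] at this
    have : (p 1 : ℝ) ≤ (a 1 : ℝ) + 1 := by nlinarith [this]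
    exact_mod_cast this
  have hcases : p 1 = a 1 ∨ p 1 = a 1 + 1 := by omega
  rcases hcases with hc1|hc1
  · left
    funext i
    refine Fin.cases e0 (fun j => ?_) i
    have : j = 0 := Subsingleton.elim _ _
    subst this
    exact hc1
  · right
    funext i
    refine Fin.cases (by rw [e0, h0]) (fun j => ?_) i
    have : j = 0 := Subsingleton.elim _ _
    subst this
    show p 1 = b 1
    omega

section aux
variable {V : Type*} [Fintype V] (φ : V → Fin 2 → ℤ)

noncomputable def colIdx (v : V) : ℕ :=
  ((Finset.univ.image fun w => φ w 0).filter (· < φ v 0)).card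

noncomputable def numCols : ℕ := (Finset.univ.image fun w => φ w 0).card

noncomputable def rowIdx (v : V) : ℕ :=
  (Finset.univ.filter fun w => φ w 0 = φ v 0 ∧ φ w 1 < φ v 1).card

variable {φ}

lemma colIdx_lt_colIdx {u v : V} (h : φ u 0 < φ v 0) : colIdx φ u < colIdx φ v := by
  apply Finset.card_lt_card
  constructor
  · intro x hx
    simp only [Finset.mem_filter] at hx ⊢
    exact ⟨hx.1, lt_trans hx.2 h⟩
  · intro hsub
    have h1 : φ u 0 ∈ (Finset.univ.image fun w => φ w 0).filter (· < φ v 0) := by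
      simp only [Finset.mem_filter, Finset.mem_image]
      exact ⟨⟨u, Finset.mem_univ u, rfl⟩, h⟩
    have h2 := hsub h1
    simp only [Finset.mem_filter] at h2
    exact lt_irrefl _ h2.2

lemma colIdx_col_eq {u v : V} (h : colIdx φ u = colIdx φ v) : φ u 0 = φ v 0 := by
  rcases lt_trichotomy (φ u 0) (φ v 0) with h'|h'|h'
  · exact absurd h (Nat.ne_of_lt (colIdx_lt_colIdx h'))
  · exact h'
  · exact absurd h.symm (Nat.ne_of_lt (colIdx_lt_colIdx h'))

lemma colIdx_lt_numCols (v : V) : colIdx φ v < numCols φ := by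
  apply Finset.card_lt_card
  constructor
  · exact Finset.filter_subset _ _
  · intro hsub
    have h1 : φ v 0 ∈ Finset.univ.image fun w => φ w 0 := by
      simp only [Finset.mem_image]; exact ⟨v, Finset.mem_univ v, rfl⟩
    have h2 := hsub h1
    simp only [Finset.mem_filter] at h2
    exact lt_irrefl _ h2.2

lemma rowIdx_lt_rowIdx {u v : V} (h0 : φ u 0 = φ v 0) (h1 : φ u 1 < φ v 1) :
    rowIdx φ u < rowIdx φ v := by
  apply Finset.card_lt_card
  constructor
  · intro x hx
    simp only [Finset.mem_filter] at hx ⊢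
    exact ⟨hx.1, hx.2.1.trans h0, lt_trans hx.2.2 h1⟩
  · intro hsub
    have h2 := hsub (by
      simp only [Finset.mem_filter]
      exact ⟨Finset.mem_univ u, h0, h1⟩)
    simp only [Finset.mem_filter] at h2
    exact lt_irrefl _ h2.2.2

lemma rowIdx_lt_card (v : V) : rowIdx φ v < Fintype.card V := by
  rw [← Finset.card_univ]
  apply Finset.card_lt_card
  constructor
  · exact Finset.filter_subset _ _
  · intro hsub
    have h2 := hsub (Finset.mem_univ v)
    simp only [Finset.mem_filter] at h2
    exact lt_irrefl _ h2.2.2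

end aux

lemma rowIdx_consec {V : Type*} [Fintype V] {G : SimpleGraph V} {φ : V → Fin 2 → ℤ}
    (hinj : Function.Injective φ)
    (hdraw : ∀ u v w : V, G.Adj u v →
      castPt (φ w) ∈ segment ℝ (castPt (φ u)) (castPt (φ v)) → w = u ∨ w = v)
    {u v : V} (hadj : G.Adj u v) (h0 : φ u 0 = φ v 0) (h1 : φ u 1 < φ v 1) :
    rowIdx φ v = rowIdx φ u + 1 := by
  classical
  have hset : (Finset.univ.filter fun w => φ w 0 = φ v 0 ∧ φ w 1 < φ v 1)
      = insert u (Finset.univ.filter fun w => φ w 0 = φ u 0 ∧ φ w 1 < φ u 1) := by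
    ext w
    simp only [Finset.mem_filter, Finset.mem_insert, Finset.mem_univ, true_and]
    constructor
    · rintro ⟨hw0, hw1⟩
      rcases lt_trichotomy (φ w 1) (φ u 1) with h'|h'|h'
      · exact Or.inr ⟨hw0.trans h0.symm, h'⟩
      · left
        apply hinj
        funext i
        refine Fin.cases (hw0.trans h0.symm) (fun j => ?_) i
        have : j = 0 := Subsingleton.elim _ _
        subst this
        show φ w 1 = φ u 1
        exact h'
      · exfalso
        have hmem : castPt (φ w) ∈ segment ℝ (castPt (φ u)) (castPt (φ v)) :=
          vert_mem_segment (h0.trans hw0.symm) (by omega) h'.le hw1.le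
        rcases hdraw u v w hadj hmem with rfl|rfl
        · exact lt_irrefl _ h'
        · exact lt_irrefl _ hw1
    · rintro (rfl|⟨hw0, hw1⟩)
      · exact ⟨h0, h1⟩
      · exact ⟨hw0.trans h0, lt_trans hw1 h1⟩
  have hu : u ∉ Finset.univ.filter fun w => φ w 0 = φ u 0 ∧ φ w 1 < φ u 1 := by
    simp
  rw [rowIdx, rowIdx, hset, Finset.card_insert_of_notMem hu]

set_option maxHeartbeats 1000000 in
theorem qLocatable_of_cols {V : Type*} [Fintype V] (G : SimpleGraph V) (l : ℕ)
    (hl : 2 ≤ l)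
    (h : ∃ φ : V → Fin 2 → ℤ, IsGridDrawing G φ ∧ (Set.range fun v => φ v 0).ncard ≤ l) :
    IsQLocatable G 2 l := by
  classical
  obtain ⟨φ, ⟨hinj, hdraw⟩, hcols⟩ := h
  obtain ⟨n, hn⟩ : ∃ n : ℕ, n = Fintype.card V := ⟨_, rfl⟩
  obtain ⟨K, hKdef⟩ : ∃ K : ℤ, K = 2 * l * (n + 1) := ⟨_, rfl⟩
  have hl2 : (2:ℤ) ≤ (l:ℤ) := by exact_mod_cast hl
  have hK1 : (1:ℤ) ≤ K := by
    have : (0:ℤ) ≤ (n:ℤ) := Int.ofNat_nonneg n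
    nlinarith
  obtain ⟨ψ, hψ0, hψ1⟩ : ∃ ψ : V → Fin 2 → ℤ, (∀ v, ψ v 0 = (colIdx φ v : ℤ)) ∧
      (∀ v, ψ v 1 = (rowIdx φ v : ℤ) + K ^ (colIdx φ v + 1)) :=
    ⟨fun v => fun i => if i = 0 then (colIdx φ v : ℤ)
      else (rowIdx φ v : ℤ) + K ^ (colIdx φ v + 1),
     fun v => if_pos rfl, fun v => if_neg (by decide)⟩
  -- number of columns
  have hm : numCols φ ≤ l := by
    have hr : (Set.range fun v => φ v 0) = ↑(Finset.univ.image fun w => φ w 0) := by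
      ext x
      simp
    rwa [hr, Set.ncard_coe_finset] at hcols
  -- injectivity of ψ
  have hψinj : Function.Injective ψ := by
    intro u v huv
    have h0 : colIdx φ u = colIdx φ v := by
      have := congrFun huv 0
      rw [hψ0, hψ0] at this
      exact_mod_cast this
    have hcol : φ u 0 = φ v 0 := colIdx_col_eq h0
    have h1 : rowIdx φ u = rowIdx φ v := by
      have := congrFun huv 1
      rw [hψ1, hψ1, h0] at this
      omega
    have hrow : φ u 1 = φ v 1 := by
      rcases lt_trichotomy (φ u 1) (φ v 1) with h'|h'|h'
      · exact absurd h1 (Nat.ne_of_lt (rowIdx_lt_rowIdx hcol h'))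
      · exact h'
      · exact absurd h1.symm (Nat.ne_of_lt (rowIdx_lt_rowIdx hcol.symm h'))
    apply hinj
    funext i
    refine Fin.cases hcol (fun j => ?_) i
    have : j = 0 := Subsingleton.elim _ _
    subst this
    exact hrow
  -- vertical edges: the new segment contains only its endpoints
  have hvert : ∀ u v : V, G.Adj u v → colIdx φ u = colIdx φ v →
      segGridPts (ψ u) (ψ v) ⊆ {ψ u, ψ v} := by
    intro u v hadj h0
    have hcol : φ u 0 = φ v 0 := colIdx_col_eq h0
    have hne1 : φ u 1 ≠ φ v 1 := by
      intro he
      apply hadj.ne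
      apply hinj
      funext i
      refine Fin.cases hcol (fun j => ?_) i
      have : j = 0 := Subsingleton.elim _ _
      subst this
      exact he
    rcases hne1.lt_or_gt with hy|hy
    · have hr := rowIdx_consec hinj hdraw hadj hcol hy
      exact vert_seg (by rw [hψ0, hψ0, h0]) (by rw [hψ1, hψ1, h0, hr]; push_cast; ring)
    · have hr := rowIdx_consec hinj hdraw hadj.symm hcol.symm hy
      intro p hp
      have hp' : p ∈ segGridPts (ψ v) (ψ u) := by
        simpa only [segGridPts, Set.mem_setOf_eq, segment_symm] using hp
      have := vert_seg (a := ψ v) (b := ψ u)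
        (by rw [hψ0, hψ0, h0]) (by rw [hψ1, hψ1, h0, hr]; push_cast; ring) hp'
      rw [Set.pair_comm]
      exact this
  -- key bound for the cross-column case
  have hkey : ∀ (cv : ℕ), (l:ℤ) * ((n:ℤ) - 1 + K ^ cv) < K ^ (cv + 1) := by
    intro cv
    have hKc : (1:ℤ) ≤ K ^ cv := one_le_pow₀ hK1
    have hn1 : (0:ℤ) ≤ (n:ℤ) := Int.ofNat_nonneg n
    have h5 : (2 * (l:ℤ) * (n:ℤ) + l) * 1 ≤ (2 * (l:ℤ) * (n:ℤ) + l) * K ^ cv :=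
      mul_le_mul_of_nonneg_left hKc (by nlinarith)
    have hKK : K ^ (cv + 1) = K * K ^ cv := by ring
    have hKe : K * K ^ cv = (2 * (l:ℤ) * ((n:ℤ) + 1)) * K ^ cv :=
      congrArg (· * K ^ cv) hKdef
    rw [hKK, hKe]
    nlinarith [h5, hKc, hl2, hn1, mul_nonneg (by linarith : (0:ℤ) ≤ (l:ℤ)) hn1]
  -- cross-column: no vertex lies on an edge segment except endpoints
  have hcross : ∀ u v w : V, G.Adj u v → colIdx φ u < colIdx φ v →
      castPt (ψ w) ∈ segment ℝ (castPt (ψ u)) (castPt (ψ v)) → w = u ∨ w = v := by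
    intro u v w _ hlt hmem
    obtain ⟨θ, hθ0, hθ1, hc⟩ := seg_coord' hmem
    have e0 := hc 0
    rw [hψ0, hψ0, hψ0] at e0
    push_cast at e0
    have hculcv : (colIdx φ u : ℝ) < (colIdx φ v : ℝ) := by exact_mod_cast hlt
    have hwlo : colIdx φ u ≤ colIdx φ w := by
      have : (colIdx φ u : ℝ) ≤ (colIdx φ w : ℝ) := by
        nlinarith [mul_nonneg hθ0 (by linarith : (0:ℝ) ≤ (colIdx φ v : ℝ) - colIdx φ u)]
      exact_mod_cast this
    have hwhi : colIdx φ w ≤ colIdx φ v := by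
      have : (colIdx φ w : ℝ) ≤ (colIdx φ v : ℝ) := by
        nlinarith [mul_nonneg (by linarith : (0:ℝ) ≤ 1 - θ)
          (by linarith : (0:ℝ) ≤ (colIdx φ v : ℝ) - colIdx φ u)]
      exact_mod_cast this
    rcases eq_or_lt_of_le hwlo with heq|hlt1
    · -- w is at the left endpoint
      left
      apply hψinj
      have heq' : (colIdx φ w : ℝ) = (colIdx φ u : ℝ) := by exact_mod_cast heq.symm
      have hθz : θ = 0 := by
        by_contra hne
        have hpos : 0 < θ := lt_of_le_of_ne hθ0 (Ne.symm hne)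
        nlinarith [mul_pos hpos (by linarith : (0:ℝ) < (colIdx φ v : ℝ) - colIdx φ u)]
      funext i
      have hci := hc i
      rw [hθz] at hci
      have : (ψ w i : ℝ) = (ψ u i : ℝ) := by linarith
      exact_mod_cast this
    rcases eq_or_lt_of_le hwhi with heq2|hlt2
    · right
      apply hψinj
      have heq' : (colIdx φ w : ℝ) = (colIdx φ v : ℝ) := by exact_mod_cast heq2
      have hθz : θ = 1 := by
        by_contra hne
        have hpos : 0 < 1 - θ := by
          rcases lt_or_eq_of_le hθ1 with h'|h'
          · linarith
          · exact absurd h' hne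
        nlinarith [mul_pos hpos (by linarith : (0:ℝ) < (colIdx φ v : ℝ) - colIdx φ u)]
      funext i
      have hci := hc i
      rw [hθz] at hci
      have : (ψ w i : ℝ) = (ψ v i : ℝ) := by linarith
      exact_mod_cast this
    -- strictly between: impossible
    exfalso
    have e1 := hc 1
    have hcvl : (colIdx φ v : ℤ) ≤ (l:ℤ) - 1 := by
      have h1 := colIdx_lt_numCols (φ := φ) v
      have := hm
      omega
    have hθl : 1 ≤ θ * l := by
      have hd1 : (1:ℝ) ≤ (colIdx φ w : ℝ) - (colIdx φ u : ℝ) := by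
        have h' : colIdx φ u + 1 ≤ colIdx φ w := hlt1
        have h'' : (colIdx φ u : ℝ) + 1 ≤ (colIdx φ w : ℝ) := by exact_mod_cast h'
        linarith
      have hd2 : (colIdx φ v : ℝ) - (colIdx φ u : ℝ) ≤ (l:ℝ) := by
        have h2' : (colIdx φ v : ℝ) ≤ (l:ℝ) := by exact_mod_cast (by omega : (colIdx φ v : ℤ) ≤ (l:ℤ))
        have h3 : (0:ℝ) ≤ (colIdx φ u : ℝ) := by positivity
        linarith
      nlinarith [mul_le_mul_of_nonneg_left hd2 hθ0]
    set P : ℤ := K ^ (colIdx φ v + 1) with hP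
    set Q : ℤ := K ^ (colIdx φ v) with hQ
    have hA0 : (0:ℤ) ≤ ψ u 1 := by
      rw [hψ1]
      have h1 : (1:ℤ) ≤ K ^ (colIdx φ u + 1) := one_le_pow₀ hK1
      have h2 : (0:ℤ) ≤ (rowIdx φ u : ℤ) := Int.ofNat_nonneg _
      linarith
    have hBP : P ≤ ψ v 1 := by
      rw [hψ1]
      have h2 : (0:ℤ) ≤ (rowIdx φ v : ℤ) := Int.ofNat_nonneg _
      linarith
    have hWub : ψ w 1 ≤ (n:ℤ) - 1 + Q := by
      rw [hψ1]
      have h1 : rowIdx φ w < n := hn ▸ rowIdx_lt_card w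
      have h1' : (rowIdx φ w : ℤ) ≤ (n:ℤ) - 1 := by omega
      have h2 : K ^ (colIdx φ w + 1) ≤ Q := by
        rw [hQ]
        exact pow_le_pow_right₀ hK1 (by omega)
      linarith
    have hkv : (l:ℤ) * ((n:ℤ) - 1 + Q) < P := hkey (colIdx φ v)
    -- move to ℝ
    have hA0' : (0:ℝ) ≤ ((ψ u 1 : ℤ) : ℝ) := by exact_mod_cast hA0
    have hBP' : ((P : ℤ) : ℝ) ≤ ((ψ v 1 : ℤ) : ℝ) := by exact_mod_cast hBP
    have hWub' : ((ψ w 1 : ℤ) : ℝ) ≤ (n:ℝ) - 1 + ((Q : ℤ) : ℝ) := by exact_mod_cast hWub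
    have hkv' : (l:ℝ) * ((n:ℝ) - 1 + ((Q : ℤ) : ℝ)) < ((P : ℤ) : ℝ) := by exact_mod_cast hkv
    have hl0 : (0:ℝ) ≤ (l:ℝ) := by positivity
    have hP0 : (0:ℝ) ≤ ((P : ℤ) : ℝ) := by
      have : (0:ℤ) ≤ P := by positivity
      exact_mod_cast this
    have s1 : θ * ((P : ℤ) : ℝ) ≤ ((ψ w 1 : ℤ) : ℝ) := by
      nlinarith [mul_nonneg (by linarith : (0:ℝ) ≤ 1 - θ) hA0',
        mul_le_mul_of_nonneg_left hBP' hθ0]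
    have s2 : ((P : ℤ) : ℝ) ≤ (l:ℝ) * ((ψ w 1 : ℤ) : ℝ) := by
      nlinarith [mul_le_mul_of_nonneg_left s1 hl0,
        mul_nonneg (by linarith : (0:ℝ) ≤ θ * l - 1) hP0]
    nlinarith [mul_le_mul_of_nonneg_left hWub' hl0]
  -- counting grid points on cross-column segments
  have hcount : ∀ u v : V, colIdx φ u ≠ colIdx φ v → (segGridPts (ψ u) (ψ v)).ncard ≤ l := by
    intro u v hne
    have hne' : ((ψ u 0 : ℤ) : ℝ) ≠ ((ψ v 0 : ℤ) : ℝ) := by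
      rw [hψ0, hψ0]
      intro he
      exact hne (by exact_mod_cast he)
    have hInj : Set.InjOn (fun p : Fin 2 → ℤ => p 0) (segGridPts (ψ u) (ψ v)) := by
      intro p hp q hq hpq
      obtain ⟨θp, hp0, hp1, hcp⟩ := seg_coord' hp
      obtain ⟨θq, hq0, hq1, hcq⟩ := seg_coord' hq
      have e1 := hcp 0
      have e2 := hcq 0
      have hpq' : ((p 0 : ℤ) : ℝ) = ((q 0 : ℤ) : ℝ) := by exact_mod_cast hpq
      have hθeq : θp = θq := by
        have hz : (θp - θq) * (((ψ v 0 : ℤ) : ℝ) - ((ψ u 0 : ℤ) : ℝ)) = 0 := by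
          nlinarith [e1, e2, hpq']
        rcases mul_eq_zero.1 hz with h'|h'
        · linarith
        · exact absurd (by linarith : ((ψ u 0 : ℤ) : ℝ) = ((ψ v 0 : ℤ) : ℝ)) hne'
      funext i
      have c1 := hcp i
      have c2 := hcq i
      rw [hθeq] at c1
      have : ((p i : ℤ) : ℝ) = ((q i : ℤ) : ℝ) := by linarith
      exact_mod_cast this
    have hbd : ∀ x : V, (0:ℝ) ≤ ((ψ x 0 : ℤ) : ℝ) ∧ ((ψ x 0 : ℤ) : ℝ) ≤ (l:ℝ) - 1 := by
      intro x
      have h1 : colIdx φ x < numCols φ := colIdx_lt_numCols x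
      have h2 : colIdx φ x ≤ l - 1 := by omega
      have h2' : (colIdx φ x : ℝ) ≤ (l:ℝ) - 1 := by
        have : ((colIdx φ x : ℤ) : ℝ) ≤ ((l:ℤ) : ℝ) - 1 := by
          have : (colIdx φ x : ℤ) ≤ (l:ℤ) - 1 := by omega
          exact_mod_cast (by linarith : (colIdx φ x : ℤ) ≤ (l:ℤ) - 1)
        exact_mod_cast this
      constructor
      · rw [hψ0]; positivity
      · rw [hψ0]; exact_mod_cast h2'
    have him : (fun p : Fin 2 → ℤ => p 0) '' segGridPts (ψ u) (ψ v)
        ⊆ Set.Icc (0:ℤ) ((l:ℤ) - 1) := by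
      rintro x ⟨p, hp, rfl⟩
      obtain ⟨θ, hθ0, hθ1, hc⟩ := seg_coord' hp
      have e0 := hc 0
      obtain ⟨hu0, hu1⟩ := hbd u
      obtain ⟨hv0, hv1⟩ := hbd v
      have hlo : (0:ℝ) ≤ ((p 0 : ℤ) : ℝ) := by
        nlinarith [mul_nonneg (by linarith : (0:ℝ) ≤ 1 - θ) hu0, mul_nonneg hθ0 hv0]
      have hhi : ((p 0 : ℤ) : ℝ) ≤ (l:ℝ) - 1 := by
        nlinarith [mul_le_mul_of_nonneg_left hu1 (by linarith : (0:ℝ) ≤ 1 - θ),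
          mul_le_mul_of_nonneg_left hv1 hθ0]
      constructor
      · exact_mod_cast hlo
      · have : ((p 0 : ℤ) : ℝ) ≤ (((l:ℤ) - 1 : ℤ) : ℝ) := by push_cast; linarith
        exact_mod_cast this
    have h1 : (segGridPts (ψ u) (ψ v)).ncard
        = ((fun p : Fin 2 → ℤ => p 0) '' segGridPts (ψ u) (ψ v)).ncard :=
      (Set.ncard_image_of_injOn hInj).symm
    have h2 : ((fun p : Fin 2 → ℤ => p 0) '' segGridPts (ψ u) (ψ v)).ncard
        ≤ (Set.Icc (0:ℤ) ((l:ℤ) - 1)).ncard :=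
      Set.ncard_le_ncard him (Set.finite_Icc _ _)
    have h3 : (Set.Icc (0:ℤ) ((l:ℤ) - 1)).ncard = l := by
      rw [← Finset.coe_Icc, Set.ncard_coe_finset, Int.card_Icc]
      have he : ((l:ℤ) - 1 + 1 - 0) = (l:ℤ) := by ring
      rw [he, Int.toNat_natCast]
    rw [h1]
    exact h3 ▸ h2
  refine ⟨ψ, ⟨hψinj, ?_⟩, ?_⟩
  · intro u v w hadj hmem
    rcases lt_trichotomy (colIdx φ u) (colIdx φ v) with h'|h'|h'
    · exact hcross u v w hadj h' hmem
    · have hmem' : ψ w ∈ segGridPts (ψ u) (ψ v) := hmem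
      rcases hvert u v hadj h' hmem' with h''|h''
      · exact Or.inl (hψinj h'')
      · exact Or.inr (hψinj h'')
    · have hmem' : castPt (ψ w) ∈ segment ℝ (castPt (ψ v)) (castPt (ψ u)) := by
        rwa [segment_symm]
      rcases hcross v u w hadj.symm h' hmem' with h''|h''
      · exact Or.inr h''
      · exact Or.inl h''
  · intro u v hadj
    rcases eq_or_ne (colIdx φ u) (colIdx φ v) with h'|h'
    · have hle : (segGridPts (ψ u) (ψ v)).ncard ≤ ({ψ u, ψ v} : Set (Fin 2 → ℤ)).ncard :=
        Set.ncard_le_ncard (hvert u v hadj h')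
          ((Set.finite_singleton _).insert _)
      have h2 : ({ψ u, ψ v} : Set (Fin 2 → ℤ)).ncard ≤ 2 := by
        refine le_trans (Set.ncard_insert_le _ _) ?_
        simp [Set.ncard_singleton]
      omega
    · exact hcount u v h'
end

section
/- The complete graph K₇ on seven vertices is 3-locatable in ℤ², but K₇ is not embeddable on 3 columns. -/
open SimpleGraph

/-!
A grid point `p` on the segment from `a` to `b` in `ℤ²` satisfies `g • (p - a) = k • (b - a)` with
`g = gcd (b - a)` and `0 ≤ k ≤ g`, so the segment carries at most `g + 1` grid points and, when
`g ≤ 2`, its only possible interior grid point is the midpoint. In the explicit drawing of `K₇`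
below every edge has `g ≤ 2` and no vertex is the midpoint of two others.

Three vertices in one column are collinear, so one of them lies between the other two, which a
grid drawing of a complete graph forbids. Hence each column holds at most two vertices, and three
columns hold at most six of the seven.
-/

/-- The grid points of the segment from `a` to `b` cut it into this many equal steps. -/
def latticeLength (a b : Fin 2 → ℤ) : ℕ := Int.gcd (b 0 - a 0) (b 1 - a 1)

lemma exists_latticeLength_mul_sub_eq {a b p : Fin 2 → ℤ} (hp : p ∈ segGridPts a b) :
    ∃ k : ℤ, 0 ≤ k ∧ k ≤ latticeLength a b ∧
      ∀ i, (latticeLength a b : ℤ) * (p i - a i) = k * (b i - a i) := by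
  obtain ⟨s, t, hs, ht, hst, hp⟩ := hp
  have hcoord : ∀ i, (p i : ℝ) - a i = t * (b i - a i) := fun i ↦ by
    have := congrFun hp i
    simp only [Pi.add_apply, Pi.smul_apply, smul_eq_mul, castPt] at this
    linear_combination (a i : ℝ) * hst - this
  set g := latticeLength a b
  obtain ⟨x, y, hbezout⟩ : ∃ x y : ℤ, (g : ℤ) = (b 0 - a 0) * x + (b 1 - a 1) * y :=
    ⟨_, _, Int.gcd_eq_gcd_ab _ _⟩
  -- the Bézout combination of the coordinates of `p - a` is `t * g`, hence an integer
  set k := (p 0 - a 0) * x + (p 1 - a 1) * y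
  have hk : (k : ℝ) = t * g := by
    have : (g : ℝ) = (b 0 - a 0) * x + (b 1 - a 1) * y := by exact_mod_cast hbezout
    push_cast [k, this]
    linear_combination (x : ℝ) * hcoord 0 + (y : ℝ) * hcoord 1
  have hg : (0 : ℝ) ≤ g := g.cast_nonneg
  refine ⟨k, ?_, ?_, fun i ↦ ?_⟩
  · exact_mod_cast (show (0 : ℝ) ≤ k by rw [hk]; positivity)
  · exact_mod_cast (show (k : ℝ) ≤ g by rw [hk]; nlinarith)
  · exact_mod_cast (show (g : ℝ) * (p i - a i) = k * (b i - a i) by rw [hcoord, hk]; ring)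

lemma latticeLength_pos {a b : Fin 2 → ℤ} (hab : a ≠ b) : 0 < latticeLength a b := by
  refine Nat.pos_of_ne_zero fun h ↦ hab ?_
  obtain ⟨h0, h1⟩ := Int.gcd_eq_zero_iff.mp h
  ext i; fin_cases i <;> simp <;> omega

lemma ncard_segGridPts_le {a b : Fin 2 → ℤ} (hab : a ≠ b) :
    (segGridPts a b).ncard ≤ latticeLength a b + 1 := by
  set g := latticeLength a b
  have hg : (0 : ℤ) < g := by exact_mod_cast latticeLength_pos hab
  have hsub : segGridPts a b ⊆
      (fun k : ℤ ↦ fun i ↦ a i + k * (b i - a i) / g) '' Set.Icc 0 (g : ℤ) := by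
    intro p hp
    obtain ⟨k, hk0, hkg, hk⟩ := exists_latticeLength_mul_sub_eq hp
    refine ⟨k, ⟨hk0, hkg⟩, funext fun i ↦ ?_⟩
    show a i + k * (b i - a i) / g = p i
    rw [← hk, Int.mul_ediv_cancel_left _ hg.ne']
    ring
  calc (segGridPts a b).ncard
      ≤ ((fun k : ℤ ↦ fun i ↦ a i + k * (b i - a i) / g) '' Set.Icc 0 (g : ℤ)).ncard :=
        Set.ncard_le_ncard hsub ((Set.finite_Icc _ _).image _)
    _ ≤ (Set.Icc 0 (g : ℤ)).ncard := Set.ncard_image_le (Set.finite_Icc _ _)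
    _ = g + 1 := by
        rw [← Finset.coe_Icc, Set.ncard_coe_finset, Int.card_Icc]; omega

lemma eq_or_eq_or_two_nsmul_eq_of_mem_segGridPts {a b p : Fin 2 → ℤ} (hab : a ≠ b)
    (h : latticeLength a b ≤ 2) (hp : p ∈ segGridPts a b) :
    p = a ∨ p = b ∨ 2 • p = a + b := by
  obtain ⟨k, hk0, hkg, hk⟩ := exists_latticeLength_mul_sub_eq hp
  have hg := latticeLength_pos hab
  interval_cases latticeLength a b <;> interval_cases k
  · exact .inl <| funext fun i ↦ by have := hk i; omega
  · exact .inr <| .inl <| funext fun i ↦ by have := hk i; omega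
  · exact .inl <| funext fun i ↦ by have := hk i; omega
  · exact .inr <| .inr <| funext fun i ↦ by have := hk i; simp; omega
  · exact .inr <| .inl <| funext fun i ↦ by have := hk i; omega

theorem isQLocatable_two_three_of_latticeLength_le_two {V : Type*} (G : SimpleGraph V)
    (φ : V → Fin 2 → ℤ) (hφ : Function.Injective φ)
    (hlen : ∀ u v, G.Adj u v → latticeLength (φ u) (φ v) ≤ 2)
    (hmid : ∀ u v w, G.Adj u v → 2 • φ w ≠ φ u + φ v) :
    IsQLocatable G 2 3 := by
  refine ⟨φ, ⟨hφ, fun u v w huv hw ↦ ?_⟩, fun u v huv ↦ ?_⟩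
  · rcases eq_or_eq_or_two_nsmul_eq_of_mem_segGridPts (hφ.ne huv.ne) (hlen u v huv) hw
      with h | h | h
    · exact .inl (hφ h)
    · exact .inr (hφ h)
    · exact absurd h (hmid u v w huv)
  · have := hlen u v huv
    have := ncard_segGridPts_le (hφ.ne huv.ne)
    omega

lemma collinear_of_forall_apply_zero_eq {s : Set (Fin 2 → ℝ)} {x : ℝ}
    (h : ∀ p ∈ s, p 0 = x) : Collinear ℝ s := by
  refine collinear_iff_exists_forall_eq_smul_vadd s |>.mpr ⟨![x, 0], ![0, 1], fun p hp ↦ ?_⟩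
  refine ⟨p 1, funext fun i ↦ ?_⟩
  fin_cases i <;> simp [h p hp]

theorem IsGridDrawing.not_collinear {V : Type*} {d : ℕ} {φ : V → Fin d → ℤ}
    (hφ : IsGridDrawing ⊤ φ) {u v w : V} (huv : u ≠ v) (huw : u ≠ w) (hvw : v ≠ w) :
    ¬ Collinear ℝ {castPt (φ u), castPt (φ v), castPt (φ w)} := by
  intro h
  rcases h.wbtw_or_wbtw_or_wbtw with h | h | h
  · exact (hφ.2 u w v huw h.mem_segment).elim huv.symm hvw
  · exact (hφ.2 v u w huv.symm h.mem_segment).elim hvw.symm huw.symm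
  · exact (hφ.2 w v u hvw.symm h.mem_segment).elim huw huv

theorem IsGridDrawing.card_filter_apply_zero_eq_le_two {V : Type*} [Fintype V]
    {φ : V → Fin 2 → ℤ} (hφ : IsGridDrawing ⊤ φ) (x : ℤ) :
    (Finset.univ.filter fun v ↦ φ v 0 = x).card ≤ 2 := by
  by_contra! h
  obtain ⟨u, hu, v, hv, w, hw, huv, huw, hvw⟩ := Finset.two_lt_card.mp h
  simp only [Finset.mem_filter, Finset.mem_univ, true_and] at hu hv hw
  refine hφ.not_collinear huv huw hvw (collinear_of_forall_apply_zero_eq (x := x) ?_)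
  simp [castPt, hu, hv, hw]

theorem IsGridDrawing.card_le_two_mul_ncard_columns {V : Type*} [Fintype V]
    {φ : V → Fin 2 → ℤ} (hφ : IsGridDrawing ⊤ φ) :
    Fintype.card V ≤ 2 * (Set.range fun v ↦ φ v 0).ncard := by
  classical
  have := Finset.card_le_mul_card_image Finset.univ 2
    fun x _ ↦ hφ.card_filter_apply_zero_eq_le_two x
  rwa [Set.ncard_eq_toFinset_card', Set.toFinset_range]

def k7Drawing : Fin 7 → Fin 2 → ℤ :=
  ![![0, 0], ![0, 1], ![1, 0], ![1, 1], ![2, 3], ![2, 4], ![3, 2]]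

theorem K7_threeLocatable_not_three_cols :
    IsQLocatable (⊤ : SimpleGraph (Fin 7)) 2 3 ∧
      ¬ EmbeddableOnCols (⊤ : SimpleGraph (Fin 7)) 3 := by
  refine ⟨isQLocatable_two_three_of_latticeLength_le_two ⊤ k7Drawing (by decide) (by decide)
    (by decide), ?_⟩
  rintro ⟨φ, hφ, hcols⟩
  have := hφ.card_le_two_mul_ncard_columns
  rw [Fintype.card_fin] at this
  omega
end

section
/- For every finite simple graph G and every integer d ≥ 2 with χ(G) ≤ 2^d, G can be located on at most χ(G) columns in ℤ^d. -/
open SimpleGraph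

/-!
Give every colour class its own column. A colour `(q, s)`, with `q ∈ {0,1}^(d-2)` and
`s ∈ {0,…,3}`, uses the column `(q, s) ∈ ℤ^(d-1)`, and its `t`-th vertex is placed at height
`6t + ⌊s/2⌋`. A lattice segment whose direction vector has two coprime coordinates has no
interior lattice point. Two colours that differ in `q` differ by `±1` in some coordinate. Two
colours with the same `q` have column difference `s' - s ∈ {±1, ±2, ±3}`; this divides `6`, so
it is coprime to the height difference exactly when it is coprime to `⌊s'/2⌋ - ⌊s/2⌋`, which
holds in all twelve cases.
-/

theorem segGridPts_eq_pair_of_isCoprime {d : ℕ} {a b : Fin d → ℤ} {i j : Fin d}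
    (h : IsCoprime (b i - a i) (b j - a j)) : segGridPts a b = {a, b} := by
  obtain ⟨u, v, huv⟩ := h
  ext p
  refine ⟨fun hp => ?_, ?_⟩
  · rw [segGridPts, Set.mem_ofPred_eq, segment_eq_image'] at hp
    obtain ⟨θ, ⟨hθ0, hθ1⟩, hpθ⟩ := hp
    have hcoord : ∀ k, (p k : ℝ) = a k + θ * (b k - a k) := fun k => by
      simpa [castPt] using (congrFun hpθ k).symm
    -- Bézout coefficients for the direction vector recover `θ` as an integer.
    set z : ℤ := u * (p i - a i) + v * (p j - a j)
    have hθz : θ = z := by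
      have hbez : (u : ℝ) * (b i - a i) + v * (b j - a j) = 1 := by exact_mod_cast huv
      simp only [z]
      push_cast
      rw [hcoord i, hcoord j]
      linear_combination -θ * hbez
    have hz : z = 0 ∨ z = 1 := by
      have h0 : (0 : ℤ) ≤ z := by exact_mod_cast hθz ▸ hθ0
      have h1 : z ≤ 1 := by exact_mod_cast hθz ▸ hθ1
      omega
    have hp : ∀ k, p k = a k + z * (b k - a k) := fun k => by
      have := hcoord k
      rw [hθz] at this
      exact_mod_cast this
    rcases hz with hz | hz
    · left; funext k; simp [hp k, hz]
    · right; funext k; simp [hp k, hz]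
  · rintro (rfl | rfl)
    exacts [left_mem_segment ℝ _ _, right_mem_segment ℝ _ _]

theorem isPrimitiveDrawing_of_injective {V : Type*} {d : ℕ} {G : SimpleGraph V}
    {φ : V → Fin d → ℤ} (hφ : Function.Injective φ)
    (hprim : ∀ u v, G.Adj u v → segGridPts (φ u) (φ v) = {φ u, φ v}) :
    IsPrimitiveDrawing G φ := by
  refine ⟨⟨hφ, fun u v w huv hw => ?_⟩, hprim⟩
  have hw' : φ w ∈ ({φ u, φ v} : Set _) := hprim u v huv ▸ hw
  rcases hw' with h | h
  exacts [.inl (hφ h), .inr (hφ h)]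

theorem locatableOnCols_of_coloring {V β : Type*} [Countable V] [Finite β] {G : SimpleGraph V}
    {d : ℕ} (C : G.Coloring β) (P : β → ℕ → Fin d → ℤ)
    (hP : Function.Injective (Function.uncurry P)) (hrank : ∀ c t, rank (P c t) = rank (P c 0))
    (hprim : ∀ c c', c ≠ c' → ∀ t t', segGridPts (P c t) (P c' t') = {P c t, P c' t'}) :
    LocatableOnCols G d (Nat.card β) := by
  obtain ⟨e, he⟩ := Countable.exists_injective_nat V
  refine ⟨fun v => P (C v) (e v), isPrimitiveDrawing_of_injective ?_ ?_, ?_⟩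
  · exact fun u v huv => he (Prod.ext_iff.1 (@hP (C u, e u) (C v, e v) huv)).2
  · exact fun u v huv => hprim _ _ (C.valid huv) _ _
  · calc _ ≤ (Set.range fun c => rank (P c 0)).ncard :=
          Set.ncard_le_ncard (by rintro _ ⟨v, rfl⟩; exact ⟨C v, (hrank _ _).symm⟩)
            (Set.finite_range _)
      _ ≤ Nat.card β := by
          rw [← Set.image_univ, ← Set.ncard_univ]
          exact Set.ncard_image_le Set.finite_univ

theorem isCoprime_sub_six_mul_add_sub_div_two {s s' : Fin 4} (h : s ≠ s') (t : ℤ) :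
    IsCoprime ((s' : ℤ) - s) (6 * t + ((s' : ℤ) / 2 - (s : ℤ) / 2)) := by
  obtain ⟨z, hz⟩ : (s' : ℤ) - s ∣ 6 := by
    fin_cases s <;> fin_cases s' <;> first | exact absurd rfl h | decide
  rw [hz, mul_assoc, add_comm, IsCoprime.add_mul_left_right_iff, Int.isCoprime_iff_gcd_eq_one]
  fin_cases s <;> fin_cases s' <;> first | exact absurd rfl h | decide

def colorPoint (n : ℕ) (c : (Fin n → Fin 2) × Fin 4) (t : ℕ) : Fin (n + 2) → ℤ :=
  Fin.snoc (Fin.snoc (fun i => (c.1 i : ℤ)) (c.2 : ℤ)) (6 * t + (c.2 : ℤ) / 2)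

theorem colorPoint_injective (n : ℕ) :
    Function.Injective (Function.uncurry (colorPoint n)) := by
  rintro ⟨⟨q, s⟩, t⟩ ⟨⟨q', s'⟩, t'⟩ h
  have hcoord : ∀ i, colorPoint n (q, s) t i = colorPoint n (q', s') t' i := congrFun h
  have hq : q = q' := funext fun i => by
    simpa [colorPoint, Fin.val_inj] using hcoord (Fin.castSucc (Fin.castSucc i))
  have hs : s = s' := by
    simpa [colorPoint, Fin.val_inj] using hcoord (Fin.castSucc (Fin.last n))
  subst hq hs
  simpa [colorPoint] using hcoord (Fin.last (n + 1))

theorem rank_colorPoint (n : ℕ) (c : (Fin n → Fin 2) × Fin 4) (t : ℕ) :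
    rank (colorPoint n c t) = rank (colorPoint n c 0) := by
  funext i
  have hcast : Fin.castLE (Nat.sub_le (n + 2) 1) i = Fin.castSucc ⟨i, i.isLt⟩ := rfl
  simp [rank, colorPoint, hcast]

theorem segGridPts_colorPoint {n : ℕ} {c c' : (Fin n → Fin 2) × Fin 4} (h : c ≠ c')
    (t t' : ℕ) :
    segGridPts (colorPoint n c t) (colorPoint n c' t') =
      {colorPoint n c t, colorPoint n c' t'} := by
  by_cases hq : c.1 = c'.1
  · have hs : c.2 ≠ c'.2 := fun hs => h (Prod.ext hq hs)
    refine segGridPts_eq_pair_of_isCoprime (i := Fin.castSucc (Fin.last n))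
      (j := Fin.last (n + 1)) ?_
    convert isCoprime_sub_six_mul_add_sub_div_two hs ((t' : ℤ) - t) using 1
    · simp [colorPoint]
    · simp only [colorPoint, Fin.snoc_last]
      ring
  · obtain ⟨i, hi⟩ := Function.ne_iff.1 hq
    refine segGridPts_eq_pair_of_isCoprime (i := Fin.castSucc (Fin.castSucc i))
      (j := Fin.castSucc (Fin.castSucc i)) (isCoprime_self.2 ?_)
    simp only [colorPoint, Fin.snoc_castSucc]
    revert hi
    generalize c.1 i = x
    generalize c'.1 i = y
    fin_cases x <;> fin_cases y <;> decide

theorem locatableOnCols_of_colorable {V : Type*} [Countable V] {G : SimpleGraph V} {n k : ℕ}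
    (hG : G.Colorable k) (hk : k ≤ 2 ^ (n + 2)) : LocatableOnCols G (n + 2) k := by
  obtain ⟨C⟩ := hG
  obtain ⟨ι⟩ : Nonempty (Fin k ↪ (Fin n → Fin 2) × Fin 4) :=
    Function.Embedding.nonempty_of_card_le (by simpa [pow_add] using hk)
  simpa using locatableOnCols_of_coloring C (fun c => colorPoint n (ι c))
    ((colorPoint_injective n).comp (ι.injective.prodMap Function.injective_id))
    (fun c => rank_colorPoint n (ι c)) (fun c c' h => segGridPts_colorPoint (ι.injective.ne h))

theorem locatableOnCols_chromaticNumber {V : Type*} [Fintype V] (G : SimpleGraph V)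
    (d : ℕ) (hd : 2 ≤ d) (h : G.chromaticNumber ≤ ((2 ^ d : ℕ) : ℕ∞)) :
    LocatableOnCols G d G.chromaticNumber.toNat := by
  obtain ⟨n, rfl⟩ := Nat.exists_eq_add_of_le' hd
  have hfin : G.chromaticNumber ≠ ⊤ := ne_top_of_le_ne_top (ENat.natCast_ne_top _) h
  exact locatableOnCols_of_colorable (G.colorable_of_chromaticNumber_ne_top hfin)
    (ENat.toNat_le_of_le_natCast h)
end

section
/- Let G be a finite simple graph and let d ≥ 2 and l be integers with 1 ≤ l ≤ 2^{d−1}. Then G can be located on l columns in ℤ^d if and only if G is embeddable on l columns. -/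
open SimpleGraph

/-! From a plane drawing on `l ≤ 2 ^ n` columns one gets a primitive drawing in `ℤ^(n+1)` by
sending the columns injectively to `{0,1}^n` and replacing the height of a vertex by its position
within its column: vertices in different columns then differ by exactly one in a `{0,1}`
coordinate, and adjacent vertices of one column become consecutive, since a drawing has no vertex
between them.

Conversely, number the columns of a primitive drawing by integers `x`, keep the last coordinate
`y`, and draw `v` at `(x, y + B x²)`. By primitivity an edge inside a column has length one, so it
stays primitive. Three vertices in distinct columns are not collinear once `B` exceeds every
determinant `|(y₂ - y₁)(x₃ - x₁) - (y₃ - y₁)(x₂ - x₁)|`, because the parabola contributes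
`B (x₂ - x₁)(x₃ - x₁)(x₃ - x₂)` to the determinant. -/

section Segment

variable {d : ℕ}

lemma castPt_mem_segment_iff {a b p : Fin d → ℤ} :
    castPt p ∈ segment ℝ (castPt a) (castPt b) ↔
      ∃ θ ∈ Set.Icc (0 : ℝ) 1, ∀ j, (p j : ℝ) = a j + θ * (b j - a j) := by
  simp only [segment_eq_image', Set.mem_image, funext_iff, castPt, Pi.add_apply, Pi.smul_apply,
    Pi.sub_apply, smul_eq_mul, eq_comm (b := (p _ : ℝ))]

lemma eq_left_of_mem_segment {a b p : Fin d → ℤ}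
    (hp : castPt p ∈ segment ℝ (castPt a) (castPt b)) {i : Fin d} (hab : a i ≠ b i)
    (hpi : p i = a i) : p = a := by
  obtain ⟨θ, -, hθ⟩ := castPt_mem_segment_iff.1 hp
  have hθ0 : θ = 0 := by
    have hba : (b i : ℝ) - a i ≠ 0 := sub_ne_zero.2 (by exact_mod_cast hab.symm)
    simpa [hpi, hba] using hθ i
  exact funext fun j => by simpa [hθ0] using hθ j

lemma eq_right_of_mem_segment {a b p : Fin d → ℤ}
    (hp : castPt p ∈ segment ℝ (castPt a) (castPt b)) {i : Fin d} (hab : a i ≠ b i)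
    (hpi : p i = b i) : p = b :=
  eq_left_of_mem_segment (segment_symm ℝ (castPt a) _ ▸ hp) hab.symm hpi

lemma sub_mul_sub_eq_of_mem_segment {a b p : Fin d → ℤ}
    (hp : castPt p ∈ segment ℝ (castPt a) (castPt b)) (i j : Fin d) :
    (p j - a j) * (b i - a i) = (b j - a j) * (p i - a i) := by
  obtain ⟨θ, -, hθ⟩ := castPt_mem_segment_iff.1 hp
  have : ((p j : ℝ) - a j) * (b i - a i) = (b j - a j) * (p i - a i) := by
    linear_combination ((b i : ℝ) - a i) * hθ j - ((b j : ℝ) - a j) * hθ i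
  exact_mod_cast this

lemma segGridPts_eq_pair_of_abs_sub_eq_one {a b : Fin d → ℤ} (i : Fin d)
    (h : |b i - a i| = 1) : segGridPts a b = {a, b} := by
  ext p
  refine ⟨fun hp => ?_, ?_⟩
  · have hab : a i ≠ b i := fun h' => by simp [h'] at h
    obtain ⟨θ, ⟨hθ0, hθ1⟩, hθ⟩ := castPt_mem_segment_iff.1 hp
    -- `θ` is the integer `(p i - a i) * (b i - a i)`, as `(b i - a i) ^ 2 = 1`
    have hsq : (b i - a i) ^ 2 = 1 := by rw [← sq_abs, h, one_pow]
    have hk : (((p i - a i) * (b i - a i) : ℤ) : ℝ) = θ := by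
      push_cast
      rw [hθ i]
      linear_combination θ * (by exact_mod_cast hsq : ((b i : ℝ) - a i) ^ 2 = 1)
    have hk0 : 0 ≤ (p i - a i) * (b i - a i) := by exact_mod_cast hk ▸ hθ0
    have hk1 : (p i - a i) * (b i - a i) ≤ 1 := by exact_mod_cast hk ▸ hθ1
    obtain hpa | hpb : p i = a i ∨ p i = b i := by
      rcases (abs_eq zero_le_one).1 h with hm | hm <;> rw [hm] at hk0 hk1 <;> omega
    exacts [.inl (eq_left_of_mem_segment hp hab hpa), .inr (eq_right_of_mem_segment hp hab hpb)]
  · rintro (rfl | rfl)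
    exacts [left_mem_segment ℝ _ _, right_mem_segment ℝ _ _]

lemma mem_segGridPts_of_mem_uIcc {a b p : Fin d → ℤ} (i : Fin d) (hab : ∀ j ≠ i, b j = a j)
    (hp : ∀ j ≠ i, p j = a j) (hpi : p i ∈ Set.uIcc (a i) (b i)) : p ∈ segGridPts a b := by
  have hpi' : (p i : ℝ) ∈ segment ℝ (a i : ℝ) (b i) := by
    rw [Set.mem_uIcc] at hpi
    rw [segment_eq_uIcc, Set.mem_uIcc]
    exact_mod_cast hpi
  rw [segment_eq_image'] at hpi'
  obtain ⟨θ, hθ, hθi⟩ := hpi'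
  refine castPt_mem_segment_iff.2 ⟨θ, hθ, fun j => ?_⟩
  by_cases hj : j = i
  · subst hj
    simpa [eq_comm] using hθi
  · simp [hab j hj, hp j hj]

lemma abs_sub_eq_one_of_segGridPts_eq_pair {a b : Fin d → ℤ} (i : Fin d)
    (hab : ∀ j ≠ i, b j = a j) (hne : a ≠ b) (h : segGridPts a b = {a, b}) :
    |b i - a i| = 1 := by
  set m := b i - a i
  have hm0 : m ≠ 0 := fun h0 => hne <| funext fun j => by
    by_cases hj : j = i
    · subst hj; omega
    · exact (hab j hj).symm
  by_contra hm1
  have hsign : a i + m.sign ≠ b i ∧ a i + m.sign ∈ Set.uIcc (a i) (b i) := by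
    rw [Set.mem_uIcc]
    rcases hm0.lt_or_gt with hneg | hpos
    · rw [Int.sign_eq_neg_one_of_neg hneg]; rw [abs_of_neg hneg] at hm1; omega
    · rw [Int.sign_eq_one_of_pos hpos]; rw [abs_of_pos hpos] at hm1; omega
  have hstep : Function.update a i (a i + m.sign) ∈ segGridPts a b :=
    mem_segGridPts_of_mem_uIcc i hab (fun j hj => Function.update_of_ne hj _ _)
      (by simpa using hsign.2)
  rcases h ▸ hstep with hstep | hstep <;> have := congrFun hstep i <;> simp at this
  exacts [hm0 this, hsign.1 this]

end Segment

lemma isGridDrawing_of_segGridPts_eq_pair {V : Type*} {d : ℕ} {G : SimpleGraph V}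
    {φ : V → Fin d → ℤ} (hinj : Function.Injective φ)
    (hprim : ∀ u v, G.Adj u v → segGridPts (φ u) (φ v) = {φ u, φ v}) : IsGridDrawing G φ :=
  ⟨hinj, fun u v w huv hw => by
    rcases (hprim u v huv ▸ hw : φ w ∈ ({φ u, φ v} : Set _)) with h | h
    exacts [.inl (hinj h), .inr (hinj h)]⟩

lemma castPt_notMem_segment_of_parabola {B x₁ x₂ x₃ y₁ y₂ y₃ : ℤ} (h₁₂ : x₁ ≠ x₂)
    (h₁₃ : x₁ ≠ x₃) (h₂₃ : x₂ ≠ x₃)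
    (hB : |(y₂ - y₁) * (x₃ - x₁) - (y₃ - y₁) * (x₂ - x₁)| < B) :
    castPt ![x₃, y₃ + B * x₃ ^ 2] ∉
      segment ℝ (castPt ![x₁, y₁ + B * x₁ ^ 2]) (castPt ![x₂, y₂ + B * x₂ ^ 2]) := by
  intro hp
  have hcross := sub_mul_sub_eq_of_mem_segment hp 0 1
  simp only [Matrix.cons_val_zero, Matrix.cons_val_one] at hcross
  have hdet : (y₂ - y₁) * (x₃ - x₁) - (y₃ - y₁) * (x₂ - x₁) =
      B * ((x₂ - x₁) * (x₃ - x₁) * (x₃ - x₂)) := by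
    linear_combination -hcross
  have hprod : 1 ≤ |(x₂ - x₁) * (x₃ - x₁) * (x₃ - x₂)| :=
    Int.one_le_abs (by simp [sub_eq_zero, h₁₂.symm, h₁₃.symm, h₂₃.symm])
  have hBpos : 0 < B := (abs_nonneg _).trans_lt hB
  rw [hdet, abs_mul, abs_of_pos hBpos] at hB
  nlinarith

section ColumnHeight

open Finset

variable {V α β : Type*} [Fintype V] [DecidableEq α] [LinearOrder β] (col : V → α) (y : V → β)

def colHeight (v : V) : ℕ := #{u | col u = col v ∧ y u < y v}

variable {col y}

lemma colHeight_lt_colHeight {u v : V} (hc : col u = col v) (hy : y u < y v) :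
    colHeight col y u < colHeight col y v := by
  refine card_lt_card ⟨fun w hw => ?_, fun hsub => ?_⟩
  · simp only [mem_filter, mem_univ, true_and] at hw ⊢
    exact ⟨hw.1.trans hc, hw.2.trans hy⟩
  · have hu : u ∈ ({w | col w = col v ∧ y w < y v} : Finset V) := by simpa using ⟨hc, hy⟩
    simpa using hsub hu

lemma eq_of_colHeight_eq {u v : V} (hc : col u = col v)
    (h : colHeight col y u = colHeight col y v) : y u = y v := by
  by_contra hne
  rcases lt_or_gt_of_ne hne with hlt | hgt
  · exact (colHeight_lt_colHeight hc hlt).ne h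
  · exact (colHeight_lt_colHeight hc.symm hgt).ne' h

lemma colHeight_eq_succ {u v : V} (hc : col u = col v) (hy : y u < y v)
    (huniq : ∀ w, col w = col u → y w = y u → w = u)
    (hgap : ∀ w, col w = col u → y u < y w → y v ≤ y w) :
    colHeight col y v = colHeight col y u + 1 := by
  classical
  have hins : ({w | col w = col v ∧ y w < y v} : Finset V) =
      insert u ({w | col w = col u ∧ y w < y u} : Finset V) := by
    ext w
    simp only [mem_insert, mem_filter, mem_univ, true_and]
    refine ⟨fun ⟨hw, hwv⟩ => ?_, ?_⟩
    · rcases lt_trichotomy (y w) (y u) with hwu | hwu | hwu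
      · exact .inr ⟨hw.trans hc.symm, hwu⟩
      · exact .inl (huniq w (hw.trans hc.symm) hwu)
      · exact absurd (hgap w (hw.trans hc.symm) hwu) (not_le.2 hwv)
    · rintro (rfl | ⟨hw, hwu⟩)
      exacts [⟨hc, hy⟩, ⟨hw.trans hc, hwu.trans hy⟩]
  rw [colHeight, hins, card_insert_of_notMem (by simp)]
  rfl

end ColumnHeight

lemma rank_snoc {n : ℕ} (c : Fin n → ℤ) (h : ℤ) : rank (Fin.snoc c h : Fin (n + 1) → ℤ) = c :=
  funext fun _ => Fin.snoc_castSucc (α := fun _ => ℤ) ..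

lemma rank_eq_rank_iff {n : ℕ} {p q : Fin (n + 1) → ℤ} :
    rank p = rank q ↔ ∀ j ≠ Fin.last n, p j = q j := by
  refine ⟨fun h j hj => ?_, fun h => funext fun i => h _ (Fin.castSucc_ne_last i)⟩
  obtain ⟨i, rfl⟩ := Fin.exists_castSucc_eq.2 hj
  exact congrFun h i

lemma Set.Finite.exists_injOn_of_ncard_le_two_pow {α : Type*} {s : Set α} {n : ℕ} (hs : s.Finite)
    (h : s.ncard ≤ 2 ^ n) : ∃ f : α → Fin n → Bool, Set.InjOn f s := by
  obtain ⟨f, -, hf⟩ := hs.exists_injOn_of_encard_le (t := (Set.univ : Set (Fin n → Bool))) (by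
    rw [Set.encard_univ, ← hs.cast_ncard_eq, ENat.card_eq_coe_fintype_card]
    simpa using (Nat.cast_le (α := ℕ∞)).2 h)
  exact ⟨f, hf⟩

lemma exists_abs_toInt_sub_toInt_eq_one {n : ℕ} {b c : Fin n → Bool} (h : b ≠ c) :
    ∃ i, |(c i).toInt - (b i).toInt| = 1 := by
  obtain ⟨i, hi⟩ := Function.ne_iff.1 h
  exact ⟨i, by cases hb : b i <;> cases hc : c i <;> simp_all⟩

lemma IsGridDrawing.colHeight_eq_succ {V : Type*} [Fintype V] {G : SimpleGraph V}
    {ψ : V → Fin 2 → ℤ} (hψ : IsGridDrawing G ψ) {u v : V} (huv : G.Adj u v)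
    (hc : ψ u 0 = ψ v 0) (hy : ψ u 1 < ψ v 1) :
    colHeight (ψ · 0) (ψ · 1) v = colHeight (ψ · 0) (ψ · 1) u + 1 := by
  refine _root_.colHeight_eq_succ hc hy
    (fun w hw0 hw1 => hψ.1 (funext (Fin.forall_fin_two.2 ⟨hw0, hw1⟩)))
    fun w hw0 huw => not_lt.1 fun hwv => ?_
  have hw : ψ w ∈ segGridPts (ψ u) (ψ v) :=
    mem_segGridPts_of_mem_uIcc 1 (fun j hj => by fin_cases j <;> simp_all)
      (fun j hj => by fin_cases j <;> simp_all) (Set.mem_uIcc.2 (.inl ⟨huw.le, hwv.le⟩))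
  rcases hψ.2 u v w huv hw with rfl | rfl
  exacts [huw.ne rfl, hwv.ne rfl]

theorem locatableOnCols_succ_of_embeddableOnCols {V : Type*} [Fintype V] {G : SimpleGraph V}
    {n l : ℕ} (hl : l ≤ 2 ^ n) (h : EmbeddableOnCols G l) : LocatableOnCols G (n + 1) l := by
  obtain ⟨ψ, hψ, hcols⟩ := h
  obtain ⟨code, hcode⟩ :=
    (Set.finite_range fun v => ψ v 0).exists_injOn_of_ncard_le_two_pow (hcols.trans hl)
  set vec : ℤ → Fin n → ℤ := fun z i => (code z i).toInt
  set height := colHeight (ψ · 0) (ψ · 1)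
  set φ : V → Fin (n + 1) → ℤ := fun v => Fin.snoc (vec (ψ v 0)) (height v : ℤ)
  have hrank (v : V) : rank (φ v) = vec (ψ v 0) := rank_snoc ..
  have hlast (v : V) : φ v (Fin.last n) = height v := Fin.snoc_last (α := fun _ => ℤ) ..
  have hvec {u v : V} (hc : ψ u 0 ≠ ψ v 0) : ∃ i, |vec (ψ v 0) i - vec (ψ u 0) i| = 1 :=
    exists_abs_toInt_sub_toInt_eq_one fun h => hc (hcode ⟨u, rfl⟩ ⟨v, rfl⟩ h)
  have hinj : Function.Injective φ := by
    intro u v h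
    have hc : ψ u 0 = ψ v 0 := by
      by_contra hc
      obtain ⟨i, hi⟩ := hvec hc
      simp [← hrank, h] at hi
    have hy : ψ u 1 = ψ v 1 := eq_of_colHeight_eq hc <| by
      exact_mod_cast (hlast u).symm.trans ((congrFun h _).trans (hlast v))
    exact hψ.1 (funext (Fin.forall_fin_two.2 ⟨hc, hy⟩))
  have hprim (u v : V) (huv : G.Adj u v) : segGridPts (φ u) (φ v) = {φ u, φ v} := by
    by_cases hc : ψ u 0 = ψ v 0
    · refine segGridPts_eq_pair_of_abs_sub_eq_one (Fin.last n) ?_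
      rw [hlast, hlast]
      rcases lt_trichotomy (ψ u 1) (ψ v 1) with hy | hy | hy
      · have : height v = height u + 1 := hψ.colHeight_eq_succ huv hc hy
        simp [this]
      · exact absurd (hψ.1 (funext (Fin.forall_fin_two.2 ⟨hc, hy⟩))) huv.ne
      · have : height u = height v + 1 := hψ.colHeight_eq_succ huv.symm hc.symm hy
        simp [this]
    · obtain ⟨i, hi⟩ := hvec hc
      rw [← hrank, ← hrank] at hi
      exact segGridPts_eq_pair_of_abs_sub_eq_one (Fin.castSucc i) hi
  refine ⟨φ, ⟨isGridDrawing_of_segGridPts_eq_pair hinj hprim, hprim⟩, ?_⟩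
  have hrange : (Set.range fun v => rank (φ v)) = vec '' Set.range fun v => ψ v 0 := by
    simp only [hrank, ← Set.range_comp, Function.comp_def]
  exact hrange ▸ (Set.ncard_image_le (Set.finite_range _)).trans hcols

theorem embeddableOnCols_of_locatableOnCols_succ {V : Type*} [Finite V] {G : SimpleGraph V}
    {n l : ℕ} (h : LocatableOnCols G (n + 1) l) : EmbeddableOnCols G l := by
  obtain ⟨φ, ⟨⟨hφinj, -⟩, hprim⟩, hcols⟩ := h
  obtain ⟨enc, henc⟩ := Countable.exists_injective_nat (Fin n → ℤ)
  set x : V → ℤ := fun v => enc (rank (φ v))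
  set y : V → ℤ := fun v => φ v (Fin.last n)
  obtain ⟨M, hM⟩ := (Set.finite_range fun t : V × V × V =>
    |(y t.2.1 - y t.1) * (x t.2.2 - x t.1) - (y t.2.2 - y t.1) * (x t.2.1 - x t.1)|).bddAbove
  set B := M + 1
  have hB (u v w : V) : |(y v - y u) * (x w - x u) - (y w - y u) * (x v - x u)| < B :=
    (hM ⟨(u, v, w), rfl⟩).trans_lt (lt_add_one M)
  set ψ : V → Fin 2 → ℤ := fun v => ![x v, y v + B * x v ^ 2]
  have hagree {u v : V} (h : x u = x v) : ∀ j ≠ Fin.last n, φ v j = φ u j :=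
    rank_eq_rank_iff.1 (henc (Nat.cast_injective h.symm))
  have hinj : Function.Injective ψ := by
    intro u v h
    have hx : x u = x v := congrFun h 0
    have hy : y u = y v := by simpa [ψ, hx] using congrFun h 1
    refine hφinj (funext fun j => ?_)
    by_cases hj : j = Fin.last n
    exacts [hj ▸ hy, (hagree hx j hj).symm]
  refine ⟨ψ, ⟨hinj, fun u v w huv hw => ?_⟩, ?_⟩
  · by_cases hx : x u = x v
    · have hy : |y v - y u| = 1 := abs_sub_eq_one_of_segGridPts_eq_pair (Fin.last n) (hagree hx)
        (hφinj.ne huv.ne) (hprim u v huv)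
      have hpair : segGridPts (ψ u) (ψ v) = {ψ u, ψ v} :=
        segGridPts_eq_pair_of_abs_sub_eq_one 1 (by simpa [ψ, hx] using hy)
      rcases (hpair ▸ hw : ψ w ∈ ({ψ u, ψ v} : Set _)) with h | h
      exacts [.inl (hinj h), .inr (hinj h)]
    by_cases hwu : x w = x u
    · exact .inl (hinj (eq_left_of_mem_segment hw (i := 0) hx hwu))
    by_cases hwv : x w = x v
    · exact .inr (hinj (eq_right_of_mem_segment hw (i := 0) hx hwv))
    exact absurd hw (castPt_notMem_segment_of_parabola hx (Ne.symm hwu) (Ne.symm hwv) (hB u v w))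
  · have hrange : (Set.range fun v => ψ v 0) =
        (fun r => (enc r : ℤ)) '' Set.range fun v => rank (φ v) := by
      simp only [← Set.range_comp, Function.comp_def]
      rfl
    exact hrange ▸ (Set.ncard_image_le (Set.finite_range _)).trans hcols

theorem locatableOnCols_iff_embeddableOnCols_general {V : Type*} [Fintype V] (G : SimpleGraph V)
    (d l : ℕ) (hd : 2 ≤ d) (hl2 : l ≤ 2 ^ (d - 1)) :
    LocatableOnCols G d l ↔ EmbeddableOnCols G l := by
  obtain ⟨n, rfl⟩ : ∃ n, d = n + 1 := ⟨d - 1, by omega⟩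
  exact ⟨embeddableOnCols_of_locatableOnCols_succ, locatableOnCols_succ_of_embeddableOnCols hl2⟩

theorem locatableOnCols_iff_embeddableOnCols {V : Type*} [Fintype V] (G : SimpleGraph V)
    (d l : ℕ) (hd : 2 ≤ d) (hl1 : 1 ≤ l) (hl2 : l ≤ 2 ^ (d - 1)) :
    LocatableOnCols G d l ↔ EmbeddableOnCols G l :=
  locatableOnCols_iff_embeddableOnCols_general G d l hd hl2
end

section
/- Let G = (V,E) be a finite simple graph with maximum degree Δ(G), let m ≥ 1, and let k₁, k₂, …, k_m be nonnegative integers with k₁ + k₂ + ⋯ + k_m ≥ Δ(G) − m + 1. Then V can be partitioned into sets V₁, V₂, …, V_m such that the induced subgraph G[V_i] has maximum degree at most k_i, for all i ∈ {1, …, m}. -/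
open SimpleGraph

/-!
Lovász's potential argument. For a colouring `f : V → ι` let `d_c(v)` be the number of neighbours
of `v` of colour `c`, and let `Φ f = ∑ᵥ (d_{f v}(v) - 2 k (f v))`, i.e. twice the number of
monochromatic edges minus `2 ∑ᵥ k (f v)`. Recolouring `v` with `j` changes `Φ` by
`2 (d_j(v) - k j) - 2 (d_{f v}(v) - k (f v))`. Since `∑_c d_c(v) = deg v ≤ Δ < ∑_c (k c + 1)`,
every vertex has a colour `j` with `d_j(v) ≤ k j`, so at a minimiser of `Φ` no vertex can have
`d_{f v}(v) > k (f v)`: recolouring it with `j` would decrease `Φ`.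
-/

open Finset

theorem Fintype.sum_sum_eq_of_symm {α M : Type*} [Fintype α] [DecidableEq α] [AddCommGroup M]
    (F : α → α → M) (hF : ∀ u w, F u w = F w u) (v : α) :
    ∑ u, ∑ w, F u w = 2 • ∑ w, F v w - F v v + ∑ u ∈ univ.erase v, ∑ w ∈ univ.erase v, F u w := by
  have hcol : ∑ u ∈ univ.erase v, F u v = ∑ w, F v w - F v v := by
    rw [eq_sub_iff_add_eq, sum_erase_add _ _ (mem_univ v)]
    exact Finset.sum_congr rfl fun u _ => hF u v
  calc ∑ u, ∑ w, F u w = ∑ w, F v w + ∑ u ∈ univ.erase v, ∑ w, F u w :=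
        (add_sum_erase _ _ (mem_univ v)).symm
    _ = ∑ w, F v w + ∑ u ∈ univ.erase v, (F u v + ∑ w ∈ univ.erase v, F u w) := by
        rw [Finset.sum_congr rfl fun u _ => (add_sum_erase _ (F u) (mem_univ v)).symm]
    _ = _ := by
        rw [sum_add_distrib, hcol]
        abel

namespace SimpleGraph

variable {V ι : Type*} [Fintype V] (G : SimpleGraph V) [DecidableRel G.Adj] [DecidableEq ι]

def colorDegree (f : V → ι) (v : V) (c : ι) : ℕ := #{w | G.Adj v w ∧ f w = c}

theorem sum_colorDegree [Fintype ι] (f : V → ι) (v : V) :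
    ∑ c, G.colorDegree f v c = G.degree v := by
  rw [← card_neighborFinset_eq_degree,
    card_eq_sum_card_fiberwise (f := f) (t := univ) fun _ _ => mem_univ _]
  simp [colorDegree, neighborFinset_eq_filter, filter_filter]

theorem exists_colorDegree_le [Fintype ι] {k : ι → ℕ} (hk : G.maxDegree < ∑ c, (k c + 1))
    (f : V → ι) (v : V) : ∃ c, G.colorDegree f v c ≤ k c := by
  have hlt : ∑ c, G.colorDegree f v c < ∑ c, (k c + 1) :=
    (G.sum_colorDegree f v ▸ G.degree_le_maxDegree v).trans_lt hk
  obtain ⟨c, -, hc⟩ := exists_lt_of_sum_lt hlt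
  exact ⟨c, Nat.lt_succ_iff.mp hc⟩

theorem colorDegree_update_self [DecidableEq V] (f : V → ι) (v : V) (j c : ι) :
    G.colorDegree (Function.update f v j) v c = G.colorDegree f v c := by
  refine congrArg card (filter_congr fun w _ => ?_)
  exact and_congr_right fun hvw => by rw [Function.update_of_ne hvw.ne']

theorem natCast_colorDegree_self (f : V → ι) (u : V) :
    (G.colorDegree f u (f u) : ℤ) = ∑ w, if G.Adj u w ∧ f w = f u then 1 else 0 := by
  rw [colorDegree, natCast_card_filter]

def lovaszPotential (k : ι → ℕ) (f : V → ι) : ℤ :=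
  ∑ u, ((G.colorDegree f u (f u) : ℤ) - 2 * k (f u))

theorem lovaszPotential_eq_add_sum_erase [DecidableEq V] (k : ι → ℕ) (f : V → ι) (v : V) :
    G.lovaszPotential k f = 2 * ((G.colorDegree f v (f v) : ℤ) - k (f v))
      + ∑ u ∈ univ.erase v, ∑ w ∈ univ.erase v, (if G.Adj u w ∧ f w = f u then 1 else 0)
      - 2 * ∑ u ∈ univ.erase v, (k (f u) : ℤ) := by
  have hsymm : ∀ u w, (if G.Adj u w ∧ f w = f u then (1 : ℤ) else 0)
      = if G.Adj w u ∧ f u = f w then 1 else 0 := fun u w => by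
    simp_rw [G.adj_comm u w, @eq_comm _ (f w)]
  rw [lovaszPotential, sum_sub_distrib, ← mul_sum]
  simp_rw [natCast_colorDegree_self]
  rw [Fintype.sum_sum_eq_of_symm _ hsymm v,
    ← add_sum_erase _ (fun u => (k (f u) : ℤ)) (mem_univ v)]
  simp only [G.irrefl, false_and, if_false]
  ring

theorem lovaszPotential_update [DecidableEq V] (k : ι → ℕ) (f : V → ι) (v : V) (j : ι) :
    G.lovaszPotential k (Function.update f v j) = G.lovaszPotential k f
      + 2 * ((G.colorDegree f v j : ℤ) - k j)
      - 2 * ((G.colorDegree f v (f v) : ℤ) - k (f v)) := by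
  have hoff : ∀ u ∈ univ.erase v, Function.update f v j u = f u :=
    fun u hu => Function.update_of_ne (ne_of_mem_erase hu) _ _
  have hrest : ∑ u ∈ univ.erase v, ∑ w ∈ univ.erase v,
      (if G.Adj u w ∧ Function.update f v j w = Function.update f v j u then (1 : ℤ) else 0)
      = ∑ u ∈ univ.erase v, ∑ w ∈ univ.erase v, if G.Adj u w ∧ f w = f u then 1 else 0 :=
    Finset.sum_congr rfl fun u hu => Finset.sum_congr rfl fun w hw => by rw [hoff u hu, hoff w hw]
  have hk : ∑ u ∈ univ.erase v, (k (Function.update f v j u) : ℤ)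
      = ∑ u ∈ univ.erase v, (k (f u) : ℤ) :=
    Finset.sum_congr rfl fun u hu => by rw [hoff u hu]
  rw [lovaszPotential_eq_add_sum_erase _ _ _ v, lovaszPotential_eq_add_sum_erase _ _ f v,
    Function.update_self, colorDegree_update_self, hrest, hk]
  ring

theorem colorDegree_self_le_of_forall_lovaszPotential_le {k : ι → ℕ} {f : V → ι}
    (hmin : ∀ g, G.lovaszPotential k f ≤ G.lovaszPotential k g)
    (hk : ∀ v, ∃ c, G.colorDegree f v c ≤ k c) (v : V) :
    G.colorDegree f v (f v) ≤ k (f v) := by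
  classical
  by_contra! hv
  obtain ⟨j, hj⟩ := hk v
  have := hmin (Function.update f v j)
  rw [lovaszPotential_update] at this
  omega

theorem exists_coloring_colorDegree_self_le [Fintype ι] [Nonempty ι] {k : ι → ℕ}
    (hk : G.maxDegree < ∑ c, (k c + 1)) :
    ∃ f : V → ι, ∀ v, G.colorDegree f v (f v) ≤ k (f v) := by
  obtain ⟨f, hf⟩ := Finite.exists_min (G.lovaszPotential k)
  exact ⟨f, G.colorDegree_self_le_of_forall_lovaszPotential_le hf (G.exists_colorDegree_le hk f)⟩

end SimpleGraph

theorem lovasz_partition {V : Type*} [Fintype V] (G : SimpleGraph V)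
    [DecidableRel G.Adj] (m : ℕ) (hm : 1 ≤ m) (k : Fin m → ℕ)
    (h : (G.maxDegree : ℤ) - m + 1 ≤ ∑ i, (k i : ℤ)) :
    ∃ P : Fin m → Set V, (∀ v : V, ∃! i, v ∈ P i) ∧
      ∀ i : Fin m, ∀ v ∈ P i, {w : V | w ∈ P i ∧ G.Adj v w}.ncard ≤ k i := by
  have : Nonempty (Fin m) := ⟨⟨0, hm⟩⟩
  have hk : G.maxDegree < ∑ i, (k i + 1) := by
    rw [sum_add_distrib, sum_const, card_univ, Fintype.card_fin, smul_eq_mul, mul_one]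
    rw [← Nat.cast_sum] at h
    omega
  obtain ⟨f, hf⟩ := G.exists_coloring_colorDegree_self_le hk
  refine ⟨fun i => {v | f v = i}, fun v => ⟨f v, rfl, fun i hi => hi.symm⟩, ?_⟩
  rintro i v rfl
  have hset : {w | f w = f v ∧ G.Adj v w} = ↑({w | G.Adj v w ∧ f w = f v} : Finset V) := by
    ext w; simp [and_comm]
  change {w | f w = f v ∧ G.Adj v w}.ncard ≤ _
  rw [hset, Set.ncard_coe_finset]
  exact hf v
end

section
/- Let d ≥ 1 be an integer and let G = (V,E) be a finite simple graph with maximum degree Δ(G) ≤ 2^{d+1} − 1. Then V can be partitioned into 2^d sets V₁, …, V_{2^d} such that each induced subgraph G[V_i] is a linear forest. -/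
open SimpleGraph Finset

section Aux

lemma linearForest_of_nbr_le_one {W : Type*} [Finite W] (H : SimpleGraph W)
    (h : ∀ v, {w | H.Adj v w}.ncard ≤ 1) : (H.IsAcyclic ∧ ∀ v : W, {w | H.Adj v w}.ncard ≤ 2) := by
  constructor
  · intro a p hp
    have h3 := hp.three_le_length
    cases p with
    | nil => simp at h3
    | cons h1 q =>
      rename_i b
      have hq : q.IsPath := by
        rw [SimpleGraph.Walk.isPath_def]
        simpa using hp.support_nodup
      cases q with
      | nil => simp at h3
      | cons h2 r =>
        rename_i c
        have hca : c ≠ a := by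
          rintro rfl
          have : r.IsPath := hq.of_cons
          rw [SimpleGraph.Walk.isPath_iff_eq_nil] at this
          subst this
          simp at h3
        have h2' : 1 < {w | H.Adj b w}.ncard := by
          rw [Set.one_lt_ncard (Set.toFinite _)]
          exact ⟨a, h1.symm, c, h2, fun hac => hca hac.symm⟩
        have := h b
        omega
  · intro v; exact (h v).trans one_le_two


lemma lovasz_part {V : Type*} [Fintype V] [DecidableEq V] (G : SimpleGraph V)
    [DecidableRel G.Adj] (k : ℕ) (hk : 1 ≤ k) (hdeg : ∀ v, G.degree v ≤ 2 * k - 1) :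
    ∃ f : V → Fin k, ∀ v, ((G.neighborFinset v).filter fun w => f w = f v).card ≤ 1 := by
  haveI : NeZero k := ⟨by omega⟩
  set E : (V → Fin k) → ℕ := fun g =>
    ((Finset.univ : Finset (V × V)).filter fun p => G.Adj p.1 p.2 ∧ g p.1 = g p.2).card with hE
  obtain ⟨f, -, hf⟩ := Finset.exists_min_image (Finset.univ : Finset (V → Fin k)) E
    ⟨fun _ => 0, Finset.mem_univ _⟩
  refine ⟨f, fun v => ?_⟩
  by_contra hv
  push_neg at hv
  -- find a colour j with at most one neighbour of v
  have hex : ∃ j : Fin k, ((G.neighborFinset v).filter fun w => f w = j).card ≤ 1 := by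
    by_contra hj
    push_neg at hj
    have hsum : (G.neighborFinset v).card =
        ∑ j : Fin k, ((G.neighborFinset v).filter fun w => f w = j).card :=
      Finset.card_eq_sum_card_fiberwise (fun x _ => Finset.mem_univ (f x))
    have h2k : 2 * k ≤ (G.neighborFinset v).card := by
      rw [hsum]
      calc 2 * k = ∑ _j : Fin k, 2 := by simp [mul_comm]
        _ ≤ _ := Finset.sum_le_sum fun j _ => hj j
    rw [G.card_neighborFinset_eq_degree] at h2k
    have := hdeg v
    omega
  obtain ⟨j, hj⟩ := hex
  have hjne : j ≠ f v := by
    rintro rfl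
    omega
  set f' : V → Fin k := Function.update f v j with hf'
  -- split the energy
  have hsplit : ∀ g : V → Fin k,
      ((Finset.univ : Finset (V × V)).filter fun p => G.Adj p.1 p.2 ∧ g p.1 = g p.2) =
        (((Finset.univ : Finset (V × V)).filter
            fun p => (G.Adj p.1 p.2 ∧ g p.1 = g p.2) ∧ p.1 ≠ v ∧ p.2 ≠ v) ∪
          ((G.neighborFinset v).filter fun w => g w = g v).image fun w => (v, w)) ∪
          ((G.neighborFinset v).filter fun w => g w = g v).image fun w => (w, v) := by
    intro g
    ext ⟨a, b⟩
    simp only [Finset.mem_filter, Finset.mem_union, Finset.mem_image, Finset.mem_univ,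
      true_and, SimpleGraph.mem_neighborFinset, Prod.mk.injEq]
    constructor
    · rintro ⟨hab, hg⟩
      by_cases ha : a = v
      · subst ha
        exact Or.inl (Or.inr ⟨b, ⟨hab, hg.symm⟩, rfl, rfl⟩)
      · by_cases hb : b = v
        · subst hb
          exact Or.inr ⟨a, ⟨hab.symm, hg⟩, rfl, rfl⟩
        · exact Or.inl (Or.inl ⟨⟨hab, hg⟩, ha, hb⟩)
    · rintro ((⟨⟨hab, hg⟩, -, -⟩ | ⟨w, ⟨hw, hgw⟩, rfl, rfl⟩) | ⟨w, ⟨hw, hgw⟩, rfl, rfl⟩)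
      · exact ⟨hab, hg⟩
      · exact ⟨hw, hgw.symm⟩
      · exact ⟨hw.symm, hgw⟩
  have hcard : ∀ g : V → Fin k, E g =
      (((Finset.univ : Finset (V × V)).filter
          fun p => (G.Adj p.1 p.2 ∧ g p.1 = g p.2) ∧ p.1 ≠ v ∧ p.2 ≠ v)).card +
        2 * ((G.neighborFinset v).filter fun w => g w = g v).card := by
    intro g
    rw [hE]
    simp only
    set X := ((Finset.univ : Finset (V × V)).filter
        fun p => (G.Adj p.1 p.2 ∧ g p.1 = g p.2) ∧ p.1 ≠ v ∧ p.2 ≠ v) with hX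
    set A := ((G.neighborFinset v).filter fun w => g w = g v).image (fun w => (v, w)) with hA
    set B := ((G.neighborFinset v).filter fun w => g w = g v).image (fun w => (w, v)) with hB
    have hXA : Disjoint X A := by
      rw [Finset.disjoint_left]
      rintro ⟨a, b⟩ hab hmem
      rw [hA, Finset.mem_image] at hmem
      obtain ⟨w, hw, heq⟩ := hmem
      rw [hX, Finset.mem_filter] at hab
      exact hab.2.2.1 (congrArg Prod.fst heq).symm
    have hXAB : Disjoint (X ∪ A) B := by
      rw [Finset.disjoint_left]
      rintro ⟨a, b⟩ hab hmem
      rw [hB, Finset.mem_image] at hmem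
      obtain ⟨w, hw, heq⟩ := hmem
      have hb : b = v := (congrArg Prod.snd heq).symm
      rw [Finset.mem_union] at hab
      rcases hab with hab | hab
      · rw [hX, Finset.mem_filter] at hab
        exact hab.2.2.2 hb
      · rw [hA, Finset.mem_image] at hab
        obtain ⟨w', hw', heq'⟩ := hab
        have ha : a = v := (congrArg Prod.fst heq').symm
        have haw : a = w := (congrArg Prod.fst heq).symm
        rw [Finset.mem_filter, SimpleGraph.mem_neighborFinset] at hw
        exact G.irrefl (ha ▸ haw ▸ hw.1)
    rw [hsplit g, Finset.card_union_of_disjoint hXAB, Finset.card_union_of_disjoint hXA,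
      hA, hB, Finset.card_image_of_injective _ (fun x y hxy => (Prod.mk.injEq _ _ _ _ ▸ hxy).2),
      Finset.card_image_of_injective _ (fun x y hxy => (Prod.mk.injEq _ _ _ _ ▸ hxy).1)]
    ring
  -- the off-v part doesn't change
  have hoff : (((Finset.univ : Finset (V × V)).filter
        fun p => (G.Adj p.1 p.2 ∧ f' p.1 = f' p.2) ∧ p.1 ≠ v ∧ p.2 ≠ v)) =
      (((Finset.univ : Finset (V × V)).filter
        fun p => (G.Adj p.1 p.2 ∧ f p.1 = f p.2) ∧ p.1 ≠ v ∧ p.2 ≠ v)) := by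
    apply Finset.filter_congr
    rintro ⟨a, b⟩ -
    simp only
    constructor
    · rintro ⟨⟨hab, hg⟩, ha, hb⟩
      rw [hf', Function.update_of_ne ha, Function.update_of_ne hb] at hg
      exact ⟨⟨hab, hg⟩, ha, hb⟩
    · rintro ⟨⟨hab, hg⟩, ha, hb⟩
      rw [hf', Function.update_of_ne ha, Function.update_of_ne hb]
      exact ⟨⟨hab, hg⟩, ha, hb⟩
  have hnew : ((G.neighborFinset v).filter fun w => f' w = f' v) =
      ((G.neighborFinset v).filter fun w => f w = j) := by
    apply Finset.filter_congr
    intro w hw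
    rw [SimpleGraph.mem_neighborFinset] at hw
    rw [hf', Function.update_of_ne (G.ne_of_adj hw.symm), Function.update_self]
  have hlt : E f' < E f := by
    rw [hcard f, hcard f', hoff, hnew]
    omega
  exact absurd (hf f' (Finset.mem_univ _)) (by omega)

end Aux

theorem partition_linearForests_of_maxDegree {V : Type*} [Fintype V] (G : SimpleGraph V)
    [DecidableRel G.Adj] (d : ℕ) (hd : 1 ≤ d) (h : G.maxDegree ≤ 2 ^ (d + 1) - 1) :
    ∃ P : Fin (2 ^ d) → Set V, (∀ v : V, ∃! i, v ∈ P i) ∧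
      ∀ i, IsLinearForest (G.induce (P i)) := by
  classical
  have hk : 1 ≤ 2 ^ d := Nat.one_le_two_pow
  have hdeg : ∀ v, G.degree v ≤ 2 * 2 ^ d - 1 := by
    intro v
    have h1 := G.degree_le_maxDegree v
    have h2 : (2 : ℕ) ^ (d + 1) = 2 * 2 ^ d := by ring
    omega
  obtain ⟨f, hf⟩ := lovasz_part G (2 ^ d) hk hdeg
  refine ⟨fun i => {v | f v = i}, fun v => ⟨f v, rfl, fun i hi => hi.symm⟩, fun i => ?_⟩
  apply linearForest_of_nbr_le_one
  intro a
  have hsub : Subtype.val '' {w : {v | f v = i} | (G.induce {v | f v = i}).Adj a w} ⊆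
      ↑((G.neighborFinset ↑a).filter fun w => f w = f ↑a) := by
    rintro x ⟨w, hw, rfl⟩
    simp only [Finset.coe_filter, Set.mem_setOf_eq, SimpleGraph.mem_neighborFinset]
    have : G.Adj ↑a ↑w := hw
    exact ⟨this, by rw [w.2, a.2]⟩
  calc {w : {v | f v = i} | (G.induce {v | f v = i}).Adj a w}.ncard
      = (Subtype.val '' {w : {v | f v = i} | (G.induce {v | f v = i}).Adj a w}).ncard :=
        (Set.ncard_image_of_injective _ Subtype.val_injective).symm
    _ ≤ (↑((G.neighborFinset ↑a).filter fun w => f w = f ↑a) : Set V).ncard :=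
        Set.ncard_le_ncard hsub (Finset.finite_toSet _)
    _ = ((G.neighborFinset ↑a).filter fun w => f w = f ↑a).card := Set.ncard_coe_finset _
    _ ≤ 1 := hf ↑a
end

section
/- Let n > 1 be an integer and let a, b, c ∈ ℤ² be points with all coordinates in {0, 1, …, n}, with b ≠ c and with a not lying on the line through b and c. Then the Euclidean distance from a to the line through b and c is at least 1/√(2n² − 2n + 1). -/
/-!
With `u = a - b` and `d = c - b`, the distance from `a` to the line `bc` is at least
`|u × d| / ‖d‖`, where `u × d` is a nonzero integer because `a` is off the line.
Since `|dᵢ| ≤ n`, we get `‖d‖² ≤ n² + (n - 1)² = 2n² - 2n + 1` unless `|d₀| = |d₁| = n`;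
in that case `n ∣ u × d`, so the distance is at least `n / (n√2)`, enough for `n ≥ 2`.
-/

/-- Cast an integer grid point in `ℤ²` to a point of the Euclidean plane. -/
def castPtE (p : Fin 2 → ℤ) : EuclideanSpace ℝ (Fin 2) := WithLp.toLp 2 (fun i => (p i : ℝ))

def cross {R : Type*} [CommRing R] (u v : Fin 2 → R) : R := u 0 * v 1 - u 1 * v 0

theorem cross_sub_smul_left {R : Type*} [CommRing R] (u v : Fin 2 → R) (t : R) :
    cross (u - t • v) v = cross u v := by
  simp only [cross, Pi.sub_apply, Pi.smul_apply, smul_eq_mul]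
  ring

section Plane

open Metric

theorem cross_sq_add_inner_sq (u v : EuclideanSpace ℝ (Fin 2)) :
    cross u v ^ 2 + inner ℝ u v ^ 2 = ‖u‖ ^ 2 * ‖v‖ ^ 2 := by
  simp only [cross, EuclideanSpace.real_norm_sq_eq, PiLp.inner_apply, Fin.sum_univ_two,
    RCLike.inner_apply, conj_trivial]
  ring

theorem abs_cross_le_norm_mul_norm (u v : EuclideanSpace ℝ (Fin 2)) :
    |cross u v| ≤ ‖u‖ * ‖v‖ := by
  refine abs_le_of_sq_le_sq ?_ (by positivity)
  nlinarith [cross_sq_add_inner_sq u v, sq_nonneg (inner ℝ u v)]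

theorem eq_smul_of_cross_eq_zero {u v : EuclideanSpace ℝ (Fin 2)} (hv : v ≠ 0)
    (h : cross u v = 0) : u = (inner ℝ u v / ‖v‖ ^ 2) • v := by
  have hv2 : ‖v‖ ^ 2 ≠ 0 := by positivity
  simp only [cross] at h
  simp only [EuclideanSpace.real_norm_sq_eq, Fin.sum_univ_two] at hv2
  ext i
  fin_cases i <;>
    simp only [Fin.zero_eta, Fin.mk_one, Fin.isValue, PiLp.smul_apply, smul_eq_mul,
      EuclideanSpace.real_norm_sq_eq, PiLp.inner_apply, Fin.sum_univ_two, RCLike.inner_apply,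
      conj_trivial] <;>
    field_simp
  · linear_combination v 1 * h
  · linear_combination -v 0 * h

theorem abs_cross_div_norm_le_infDist (x y w : EuclideanSpace ℝ (Fin 2)) :
    |cross (x -ᵥ y) (w -ᵥ y)| / ‖w -ᵥ y‖ ≤ infDist x (line[ℝ, y, w] : Set _) := by
  rw [le_infDist ⟨y, left_mem_affineSpan_pair ℝ y w⟩]
  intro P hP
  rw [SetLike.mem_coe, ← vsub_vadd P y, vadd_left_mem_affineSpan_pair] at hP
  obtain ⟨t, ht⟩ := hP
  have hxP : x -ᵥ P = (x -ᵥ y) - t • (w -ᵥ y) := by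
    rw [ht, ← vsub_sub_vsub_cancel_right x P y]
  calc |cross (x -ᵥ y) (w -ᵥ y)| / ‖w -ᵥ y‖
      = |cross (x -ᵥ P) (w -ᵥ y)| / ‖w -ᵥ y‖ := by
        rw [hxP, WithLp.ofLp_sub, WithLp.ofLp_smul, cross_sub_smul_left]
    _ ≤ ‖x -ᵥ P‖ :=
        div_le_of_le_mul₀ (norm_nonneg _) (norm_nonneg _) (abs_cross_le_norm_mul_norm _ _)
    _ = dist x P := (dist_eq_norm_vsub _ _ _).symm

theorem mem_affineSpan_pair_of_cross_eq_zero {x y w : EuclideanSpace ℝ (Fin 2)} (h : y ≠ w)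
    (hc : cross (x -ᵥ y) (w -ᵥ y) = 0) : x ∈ line[ℝ, y, w] := by
  rw [← vsub_vadd x y, vadd_left_mem_affineSpan_pair]
  exact ⟨_, (eq_smul_of_cross_eq_zero (vsub_ne_zero.2 h.symm) hc).symm⟩

end Plane

theorem sq_add_sq_le_mul_cross_sq {n : ℤ} (hn : 1 < n) {u d : Fin 2 → ℤ}
    (hd : ∀ i, |d i| ≤ n) (hz : cross u d ≠ 0) : d 0 ^ 2 + d 1 ^ 2 ≤ (2 * n ^ 2 - 2 * n + 1) * cross u d ^ 2 := by
  have hz1 : 1 ≤ cross u d ^ 2 := by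
    have : 0 < cross u d ^ 2 := by positivity
    omega
  rw [← sq_abs (d 0), ← sq_abs (d 1)]
  by_cases hmax : |d 0| = n ∧ |d 1| = n
  · obtain ⟨h0, h1⟩ := hmax
    have hdvd : n ∣ cross u d :=
      dvd_sub (dvd_mul_of_dvd_right (h1 ▸ abs_dvd_self _) _)
        (dvd_mul_of_dvd_right (h0 ▸ abs_dvd_self _) _)
    have hnz : n ≤ |cross u d| := Int.le_of_dvd (abs_pos.2 hz) ((dvd_abs _ _).2 hdvd)
    have hnz2 : n ^ 2 ≤ cross u d ^ 2 := by
      rw [← sq_abs (cross u d)]; exact pow_le_pow_left₀ (by omega) hnz 2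
    have hcoef : 2 * n ^ 2 ≤ (2 * n ^ 2 - 2 * n + 1) * n ^ 2 := by
      nlinarith [mul_nonneg (sq_nonneg n) (by nlinarith : (0 : ℤ) ≤ 2 * n ^ 2 - 2 * n - 1)]
    rw [h0, h1]
    nlinarith
  · have h : |d 0| ^ 2 + |d 1| ^ 2 ≤ n ^ 2 + (n - 1) ^ 2 := by
      have := hd 0; have := hd 1
      rcases not_and_or.1 hmax with h | h
      · have : |d 0| ≤ n - 1 := by omega
        nlinarith [abs_nonneg (d 0), abs_nonneg (d 1)]
      · have : |d 1| ≤ n - 1 := by omega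
        nlinarith [abs_nonneg (d 0), abs_nonneg (d 1)]
    nlinarith

theorem one_div_sqrt_le_abs_div {r z D : ℝ} (hD : 0 < D) (h : D ^ 2 ≤ r * z ^ 2) :
    1 / √r ≤ |z| / D := by
  have hr : 0 < r := by nlinarith [sq_nonneg z]
  rw [div_le_div_iff₀ (Real.sqrt_pos.2 hr) hD, one_mul, ← Real.sqrt_sq_eq_abs,
    ← Real.sqrt_mul (sq_nonneg z), mul_comm]
  exact Real.le_sqrt_of_sq_le h

theorem castPtE_injective : Function.Injective castPtE := by
  intro p q h
  funext i
  simpa [castPtE] using congrFun (congrArg WithLp.ofLp h) i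

theorem castPtE_sub (p q : Fin 2 → ℤ) : castPtE (p - q) = castPtE p -ᵥ castPtE q := by
  ext i
  simp [castPtE]

theorem cross_castPtE (p q : Fin 2 → ℤ) :
    cross (castPtE p) (castPtE q) = ((cross p q : ℤ) : ℝ) := by
  simp [cross, castPtE]

theorem norm_castPtE_sq (p : Fin 2 → ℤ) :
    ‖castPtE p‖ ^ 2 = ((p 0 ^ 2 + p 1 ^ 2 : ℤ) : ℝ) := by
  simp [castPtE, EuclideanSpace.real_norm_sq_eq, Fin.sum_univ_two]

theorem gridPoint_line_dist_general (n : ℕ) (hn : 1 < n) (a b c : Fin 2 → ℤ)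
    (hb : ∀ i, 0 ≤ b i ∧ b i ≤ n)
    (hc : ∀ i, 0 ≤ c i ∧ c i ≤ n) (hbc : b ≠ c)
    (haline : (castPtE a) ∉ (affineSpan ℝ {castPtE b, castPtE c} : Set (EuclideanSpace ℝ (Fin 2)))) :
    1 / Real.sqrt (2 * n ^ 2 - 2 * n + 1) ≤
      Metric.infDist (castPtE a) (affineSpan ℝ {castPtE b, castPtE c} : Set (EuclideanSpace ℝ (Fin 2))) := by
  have hd : ∀ i, |(c - b) i| ≤ n := fun i => by
    have := hb i; have := hc i
    rw [Pi.sub_apply, abs_le]; constructor <;> omega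
  have hbc' : castPtE b ≠ castPtE c := castPtE_injective.ne hbc
  have hcross : cross (a - b) (c - b) ≠ 0 := fun h => haline <|
    mem_affineSpan_pair_of_cross_eq_zero hbc' <| by
      rw [← castPtE_sub, ← castPtE_sub, cross_castPtE, h, Int.cast_zero]
  have hkey := sq_add_sq_le_mul_cross_sq (by exact_mod_cast hn) hd hcross
  calc 1 / √(2 * n ^ 2 - 2 * n + 1)
      ≤ |((cross (a - b) (c - b) : ℤ) : ℝ)| / ‖castPtE (c - b)‖ := by
        refine one_div_sqrt_le_abs_div (norm_pos_iff.2 ?_) ?_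
        · rw [castPtE_sub]; exact vsub_ne_zero.2 hbc'.symm
        · rw [norm_castPtE_sq]; exact_mod_cast hkey
    _ = |cross (castPtE a -ᵥ castPtE b) (castPtE c -ᵥ castPtE b)| / ‖castPtE c -ᵥ castPtE b‖ := by
        rw [← castPtE_sub, ← castPtE_sub, cross_castPtE]
    _ ≤ _ := abs_cross_div_norm_le_infDist _ _ _

theorem gridPoint_line_dist (n : ℕ) (hn : 1 < n) (a b c : Fin 2 → ℤ)
    (ha : ∀ i, 0 ≤ a i ∧ a i ≤ n) (hb : ∀ i, 0 ≤ b i ∧ b i ≤ n)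
    (hc : ∀ i, 0 ≤ c i ∧ c i ≤ n) (hbc : b ≠ c)
    (haline : (castPtE a) ∉ (affineSpan ℝ {castPtE b, castPtE c} : Set (EuclideanSpace ℝ (Fin 2)))) :
    1 / Real.sqrt (2 * n ^ 2 - 2 * n + 1) ≤
      Metric.infDist (castPtE a) (affineSpan ℝ {castPtE b, castPtE c} : Set (EuclideanSpace ℝ (Fin 2))) :=
  gridPoint_line_dist_general n hn a b c hb hc hbc haline
end
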